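/- arXiv:2506.02174 — 4 statements merged into one kernel-verified Lean document; each statement's English description precedes it below -/
import Mathlib

section
/- The PDHG operator with step-size η < 1/‖A‖₂ is firmly non-expansive with respect to the seminorm ‖·‖_P: for all u, v ∈ ℝⁿ × ℝᵐ, ‖PDHG(u) − PDHG(v)‖_P² ≤ ‖u − v‖_P² − ‖(PDHG(u) − u) − (PDHG(v) − v)‖_P². -/
open Matrix
open scoped BigOperators

noncomputable section

/-- Euclidean norm of a vector in `ℝᵏ`. -/
def nrm {k : ℕ} (v : Fin k → ℝ) : ℝ := Real.sqrt (v ⬝ᵥ v)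

/-- Euclidean norm of a primal-dual pair `z = (x, y) ∈ ℝⁿ × ℝᵐ`. -/
def nrmP {n m : ℕ} (z : (Fin n → ℝ) × (Fin m → ℝ)) : ℝ :=
  Real.sqrt (z.1 ⬝ᵥ z.1 + z.2 ⬝ᵥ z.2)

/-- Spectral norm `‖A‖₂` of a matrix: the supremum of `‖Ax‖₂` over unit vectors `x`. -/
def specNorm {n m : ℕ} (A : Matrix (Fin m) (Fin n) ℝ) : ℝ :=
  sSup {r | ∃ x : Fin n → ℝ, nrm x = 1 ∧ r = nrm (A *ᵥ x)}

/-- Componentwise positive part `[v]⁺`. -/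
def posPt {k : ℕ} (v : Fin k → ℝ) : Fin k → ℝ := fun i => max (v i) 0

/-- The Lagrangian `L(x,y) = cᵀx − yᵀAx + bᵀy` of the standard-form LP. -/
def Lag {n m : ℕ} (A : Matrix (Fin m) (Fin n) ℝ) (b : Fin m → ℝ) (c : Fin n → ℝ)
    (x : Fin n → ℝ) (y : Fin m → ℝ) : ℝ :=
  c ⬝ᵥ x - y ⬝ᵥ (A *ᵥ x) + b ⬝ᵥ y

/-- One PDHG iteration with (equal) step-size `η`:
`x⁺ = proj_{ℝ₊ⁿ}(x + ηAᵀy − ηc)`, `y⁺ = y − ηA(2x⁺ − x) + ηb`. -/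
def pdhgStep {n m : ℕ} (A : Matrix (Fin m) (Fin n) ℝ) (b : Fin m → ℝ) (c : Fin n → ℝ)
    (η : ℝ) (z : (Fin n → ℝ) × (Fin m → ℝ)) : (Fin n → ℝ) × (Fin m → ℝ) :=
  let x' := posPt (z.1 + η • (Aᵀ *ᵥ z.2) - η • c)
  (x', z.2 - η • (A *ᵥ ((2 : ℝ) • x' - z.1)) + η • b)

/-- Quadratic form `wᵀPw` of `P = [[(1/η)Iₙ, Aᵀ], [A, (1/η)Iₘ]]`. -/
def Pquad {n m : ℕ} (A : Matrix (Fin m) (Fin n) ℝ) (η : ℝ)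
    (w : (Fin n → ℝ) × (Fin m → ℝ)) : ℝ :=
  (1 / η) * (w.1 ⬝ᵥ w.1) + 2 * (w.2 ⬝ᵥ (A *ᵥ w.1)) + (1 / η) * (w.2 ⬝ᵥ w.2)

/-- The seminorm `‖w‖_P = √(wᵀPw)`. -/
def Pnorm {n m : ℕ} (A : Matrix (Fin m) (Fin n) ℝ) (η : ℝ)
    (w : (Fin n → ℝ) × (Fin m → ℝ)) : ℝ := Real.sqrt (Pquad A η w)

/-- `σ_max(P)`: the largest eigenvalue of the symmetric matrix `P`, i.e. the
supremum of the Rayleigh quotient `wᵀPw` over unit vectors `w`. -/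
def sigmaMaxP {n m : ℕ} (A : Matrix (Fin m) (Fin n) ℝ) (η : ℝ) : ℝ :=
  sSup {r | ∃ w : (Fin n → ℝ) × (Fin m → ℝ), nrmP w = 1 ∧ r = Pquad A η w}

/-- Application of the matrix `P`: `Pw = ((1/η)w₁ + Aᵀw₂, Aw₁ + (1/η)w₂)`. -/
def Papply {n m : ℕ} (A : Matrix (Fin m) (Fin n) ℝ) (η : ℝ)
    (w : (Fin n → ℝ) × (Fin m → ℝ)) : (Fin n → ℝ) × (Fin m → ℝ) :=
  ((1 / η) • w.1 + Aᵀ *ᵥ w.2, A *ᵥ w.1 + (1 / η) • w.2)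

/-- The set `Z*` of saddle points of `L` over `Z = ℝ₊ⁿ × ℝᵐ`:
`L(x*, y) ≤ L(x*, y*) ≤ L(x, y*)` for all `(x, y) ∈ Z`. -/
def saddleSet {n m : ℕ} (A : Matrix (Fin m) (Fin n) ℝ) (b : Fin m → ℝ) (c : Fin n → ℝ) :
    Set ((Fin n → ℝ) × (Fin m → ℝ)) :=
  {z | (∀ i, 0 ≤ z.1 i) ∧
    (∀ y : Fin m → ℝ, Lag A b c z.1 y ≤ Lag A b c z.1 z.2) ∧
    (∀ x : Fin n → ℝ, (∀ i, 0 ≤ x i) → Lag A b c z.1 z.2 ≤ Lag A b c x z.2)}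

/-- Euclidean distance `dist₂(z, S)` from `z` to a set `S`. -/
def dist2 {n m : ℕ} (z : (Fin n → ℝ) × (Fin m → ℝ))
    (S : Set ((Fin n → ℝ) × (Fin m → ℝ))) : ℝ :=
  sInf ((fun w => nrmP (z - w)) '' S)

/-- `P`-seminorm distance `dist_P(z, S)` from `z` to a set `S`. -/
def distP {n m : ℕ} (A : Matrix (Fin m) (Fin n) ℝ) (η : ℝ)
    (z : (Fin n → ℝ) × (Fin m → ℝ)) (S : Set ((Fin n → ℝ) × (Fin m → ℝ))) : ℝ :=
  sInf ((fun w => Pnorm A η (z - w)) '' S)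

/-- KKT error `KKT(z) = ‖(Ax − b, [Aᵀy − c]⁺, [cᵀx − bᵀy]⁺)‖₂`. -/
def KKTerr {n m : ℕ} (A : Matrix (Fin m) (Fin n) ℝ) (b : Fin m → ℝ) (c : Fin n → ℝ)
    (z : (Fin n → ℝ) × (Fin m → ℝ)) : ℝ :=
  Real.sqrt ((A *ᵥ z.1 - b) ⬝ᵥ (A *ᵥ z.1 - b)
    + posPt (Aᵀ *ᵥ z.2 - c) ⬝ᵥ posPt (Aᵀ *ᵥ z.2 - c)
    + (max (c ⬝ᵥ z.1 - b ⬝ᵥ z.2) 0) ^ 2)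

/-- Normalized duality gap `ρ_r(z) = sup_{ẑ ∈ W_r(z)} (L(x, ŷ) − L(x̂, y)) / r`,
where `W_r(z) = {ẑ ∈ Z : ‖z − ẑ‖₂ ≤ r}`. -/
def rhoGap {n m : ℕ} (A : Matrix (Fin m) (Fin n) ℝ) (b : Fin m → ℝ) (c : Fin n → ℝ)
    (r : ℝ) (z : (Fin n → ℝ) × (Fin m → ℝ)) : ℝ :=
  sSup {g | ∃ w : (Fin n → ℝ) × (Fin m → ℝ), (∀ i, 0 ≤ w.1 i) ∧ nrmP (z - w) ≤ r ∧
    g = (Lag A b c z.1 w.2 - Lag A b c w.1 z.2) / r}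

/-- The subdifferential operator
`F(z) = {(c − Aᵀy + g, Ax − b) : g ∈ N_{ℝ₊ⁿ}(x)}`, where `N_{ℝ₊ⁿ}(x)` is the
normal cone of `ℝ₊ⁿ` at `x ∈ ℝ₊ⁿ` (the set is empty if `x ∉ ℝ₊ⁿ`). -/
def Fop {n m : ℕ} (A : Matrix (Fin m) (Fin n) ℝ) (b : Fin m → ℝ) (c : Fin n → ℝ)
    (z : (Fin n → ℝ) × (Fin m → ℝ)) : Set ((Fin n → ℝ) × (Fin m → ℝ)) :=
  {w | (∀ i, 0 ≤ z.1 i) ∧ ∃ g : Fin n → ℝ,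
    (∀ u : Fin n → ℝ, (∀ i, 0 ≤ u i) → g ⬝ᵥ (u - z.1) ≤ 0) ∧
    w = (c - Aᵀ *ᵥ z.2 + g, A *ᵥ z.1 - b)}

/-- `dist₂(0, F(z)) = inf {‖w‖₂ : w ∈ F(z)}`. -/
def distF {n m : ℕ} (A : Matrix (Fin m) (Fin n) ℝ) (b : Fin m → ℝ) (c : Fin n → ℝ)
    (z : (Fin n → ℝ) × (Fin m → ℝ)) : ℝ :=
  sInf (nrmP '' Fop A b c z)

end

/-!
Write `u - v = (X, Y)` and `X'` for the difference of the new primal iterates. Since the dual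
update is affine, `PDHG u - PDHG v = (X', Y - ηA(2X' - X))`, and expanding the quadratic form gives
`‖u - v‖²_P = ‖PDHG u - PDHG v‖²_P + ‖(PDHG u - PDHG v) - (u - v)‖²_P + (2/η)((X - X')·X' + η Y·AX')`.
The primal arguments of the projection differ by `X + ηAᵀY`, so the last term is nonnegative by
firm nonexpansiveness of the projection onto `ℝ₊ⁿ`. The step-size bound makes `P` positive
semidefinite (Cauchy–Schwarz and `‖Ax‖ ≤ ‖A‖₂‖x‖`), so `‖w‖²_P` is the quadratic form `wᵀPw`.
-/

namespace PDHG

variable {k n m : ℕ}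

open scoped Matrix.Norms.L2Operator

lemma nrm_eq_norm (v : Fin k → ℝ) : nrm v = ‖(EuclideanSpace.equiv (Fin k) ℝ).symm v‖ := by
  rw [nrm, EuclideanSpace.norm_eq]
  simp [dotProduct, sq]

lemma dotProduct_le_nrm_mul_nrm (v w : Fin k → ℝ) : v ⬝ᵥ w ≤ nrm v * nrm w := by
  simpa [nrm, dotProduct, sq] using Real.sum_mul_le_sqrt_mul_sqrt Finset.univ v w

lemma nrm_smul (r : ℝ) (v : Fin k → ℝ) : nrm (r • v) = |r| * nrm v := by
  simp only [nrm_eq_norm, map_smul, norm_smul, Real.norm_eq_abs]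

lemma bddAbove_nrm_mulVec_unit (A : Matrix (Fin m) (Fin n) ℝ) :
    BddAbove {r | ∃ x : Fin n → ℝ, nrm x = 1 ∧ r = nrm (A *ᵥ x)} := by
  refine ⟨‖A‖, ?_⟩
  rintro r ⟨x, hx, rfl⟩
  have := A.l2_opNorm_mulVec ((EuclideanSpace.equiv (Fin n) ℝ).symm x)
  rw [nrm_eq_norm] at hx ⊢
  rwa [hx, mul_one] at this

lemma nrm_mulVec_le_specNorm_mul (A : Matrix (Fin m) (Fin n) ℝ) (x : Fin n → ℝ) :
    nrm (A *ᵥ x) ≤ specNorm A * nrm x := by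
  rcases eq_or_ne x 0 with rfl | hx
  · simp [nrm]
  have hpos : 0 < nrm x := by
    rw [nrm_eq_norm]; simpa using hx
  have hunit : nrm ((nrm x)⁻¹ • x) = 1 := by
    rw [nrm_smul, abs_of_pos (inv_pos.2 hpos), inv_mul_cancel₀ hpos.ne']
  have := le_csSup (bddAbove_nrm_mulVec_unit A) ⟨_, hunit, rfl⟩
  rw [mulVec_smul, nrm_smul, abs_of_pos (inv_pos.2 hpos), inv_mul_le_iff₀ hpos] at this
  exact this.trans_eq (mul_comm _ _)

lemma nrm_sq (v : Fin k → ℝ) : nrm v ^ 2 = v ⬝ᵥ v :=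
  Real.sq_sqrt (Finset.sum_nonneg fun i _ => mul_self_nonneg (v i))

lemma nrm_neg (v : Fin k → ℝ) : nrm (-v) = nrm v := by
  simp [nrm]

lemma Pquad_nonneg (A : Matrix (Fin m) (Fin n) ℝ) {η : ℝ} (hη : 0 < η)
    (hA : η * specNorm A ≤ 1) (w : (Fin n → ℝ) × (Fin m → ℝ)) : 0 ≤ Pquad A η w := by
  obtain ⟨x, y⟩ := w
  have hCS : -(y ⬝ᵥ (A *ᵥ x)) ≤ nrm y * (specNorm A * nrm x) := by
    calc -(y ⬝ᵥ (A *ᵥ x)) = -y ⬝ᵥ (A *ᵥ x) := (neg_dotProduct _ _).symm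
      _ ≤ nrm y * nrm (A *ᵥ x) := by simpa [nrm_neg] using dotProduct_le_nrm_mul_nrm (-y) (A *ᵥ x)
      _ ≤ nrm y * (specNorm A * nrm x) := by
        gcongr
        · exact Real.sqrt_nonneg _
        · exact nrm_mulVec_le_specNorm_mul A x
  have hx := nrm_sq x
  have hy := nrm_sq y
  have hxy : 0 ≤ nrm x * nrm y := mul_nonneg (Real.sqrt_nonneg _) (Real.sqrt_nonneg _)
  have key : 0 ≤ η * Pquad A η (x, y) := by
    simp only [Pquad]
    rw [← hx, ← hy]
    field_simp
    nlinarith [sq_nonneg (nrm x - nrm y)]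
  exact nonneg_of_mul_nonneg_right key hη

lemma sq_Pnorm (A : Matrix (Fin m) (Fin n) ℝ) {η : ℝ} (hη : 0 < η)
    (hA : η * specNorm A ≤ 1) (w : (Fin n → ℝ) × (Fin m → ℝ)) :
    Pnorm A η w ^ 2 = Pquad A η w :=
  Real.sq_sqrt (Pquad_nonneg A hη hA w)

lemma posPt_sub_dotProduct_self_le (p q : Fin k → ℝ) :
    (posPt p - posPt q) ⬝ᵥ (posPt p - posPt q) ≤ (p - q) ⬝ᵥ (posPt p - posPt q) := by
  refine Finset.sum_le_sum fun i _ => ?_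
  simp only [Pi.sub_apply, posPt]
  rcases le_total 0 (p i) with hp | hp <;> rcases le_total 0 (q i) with hq | hq <;>
    simp only [max_eq_left, max_eq_right, hp, hq] <;> nlinarith

lemma pdhgStep_sub_pdhgStep (A : Matrix (Fin m) (Fin n) ℝ) (b : Fin m → ℝ) (c : Fin n → ℝ)
    (η : ℝ) (u v : (Fin n → ℝ) × (Fin m → ℝ)) :
    let X' := (pdhgStep A b c η u).1 - (pdhgStep A b c η v).1
    pdhgStep A b c η u - pdhgStep A b c η v =
      (X', (u - v).2 - η • (A *ᵥ ((2 : ℝ) • X' - (u - v).1))) := by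
  refine Prod.ext rfl ?_
  simp only [pdhgStep, Prod.fst_sub, Prod.snd_sub, mulVec_sub, mulVec_smul]
  module

lemma pdhgStep_fst_sub_dotProduct_nonneg (A : Matrix (Fin m) (Fin n) ℝ) (b : Fin m → ℝ)
    (c : Fin n → ℝ) (η : ℝ) (u v : (Fin n → ℝ) × (Fin m → ℝ)) :
    let X' := (pdhgStep A b c η u).1 - (pdhgStep A b c η v).1
    0 ≤ ((u - v).1 - X') ⬝ᵥ X' + η * ((u - v).2 ⬝ᵥ (A *ᵥ X')) := by
  intro X'
  set p := u.1 + η • (Aᵀ *ᵥ u.2) - η • c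
  set q := v.1 + η • (Aᵀ *ᵥ v.2) - η • c
  have hproj : X' ⬝ᵥ X' ≤ (p - q) ⬝ᵥ X' := posPt_sub_dotProduct_self_le p q
  have hpq : p - q = (u - v).1 + η • (Aᵀ *ᵥ (u - v).2) := by
    simp only [p, q, Prod.fst_sub, Prod.snd_sub, mulVec_sub]
    module
  rw [hpq, add_dotProduct, smul_dotProduct, mulVec_transpose, ← dotProduct_mulVec,
    smul_eq_mul] at hproj
  rw [sub_dotProduct]
  linarith

lemma Pquad_split_pdhg (A : Matrix (Fin m) (Fin n) ℝ) {η : ℝ} (hη : η ≠ 0)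
    (w : (Fin n → ℝ) × (Fin m → ℝ)) (X' : Fin n → ℝ) :
    let w' := (X', w.2 - η • (A *ᵥ ((2 : ℝ) • X' - w.1)))
    Pquad A η w = Pquad A η w' + Pquad A η (w' - w) +
      (2 / η) * ((w.1 - X') ⬝ᵥ X' + η * (w.2 ⬝ᵥ (A *ᵥ X'))) := by
  obtain ⟨X, Y⟩ := w
  simp only [Pquad, Prod.mk_sub_mk, mulVec_sub, mulVec_smul,
    dotProduct_sub, sub_dotProduct, dotProduct_smul, smul_dotProduct, smul_eq_mul]
  rw [dotProduct_comm X' X, dotProduct_comm (A *ᵥ X') Y, dotProduct_comm (A *ᵥ X) Y,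
    dotProduct_comm (A *ᵥ X) (A *ᵥ X')]
  field_simp
  ring

end PDHG

/-- the PDHG operator with `η < 1/‖A‖₂` is firmly non-expansive in `‖·‖_P`:
`‖PDHG(u) − PDHG(v)‖_P² ≤ ‖u − v‖_P² − ‖(PDHG(u) − u) − (PDHG(v) − v)‖_P²`. -/
theorem stmt7 {n m : ℕ} (A : Matrix (Fin m) (Fin n) ℝ) (b : Fin m → ℝ) (c : Fin n → ℝ)
    (η : ℝ) (hη0 : 0 < η) (hη : η < 1 / specNorm A) :
    ∀ u v : (Fin n → ℝ) × (Fin m → ℝ),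
      (Pnorm A η (pdhgStep A b c η u - pdhgStep A b c η v)) ^ 2 ≤
        (Pnorm A η (u - v)) ^ 2 -
          (Pnorm A η ((pdhgStep A b c η u - u) - (pdhgStep A b c η v - v))) ^ 2 := by
  have hA : η * specNorm A ≤ 1 := by
    have hs : 0 < specNorm A := one_div_pos.1 (hη0.trans hη)
    exact ((lt_div_iff₀ hs).1 (by simpa using hη)).le
  intro u v
  simp only [PDHG.sq_Pnorm A hη0 hA, sub_sub_sub_comm _ u, PDHG.pdhgStep_sub_pdhgStep]
  have hsplit := PDHG.Pquad_split_pdhg A hη0.ne' (u - v)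
    ((pdhgStep A b c η u).1 - (pdhgStep A b c η v).1)
  have hmono := PDHG.pdhgStep_fst_sub_dotProduct_nonneg A b c η u v
  have hgap : 0 ≤ (2 / η) * _ := mul_nonneg (by positivity) hmono
  linarith
end

section
/- Let {z^k} be Halpern PDHG iterates, z^{k+1} = ((k+1)/(k+2))·PDHG(z^k) + (1/(k+2))·z^0, with step-size η < 1/‖A‖₂, and assume the fixed-point set Z* := {z* : PDHG(z*) = z*} is nonempty. Then for every k ≥ 1, ‖z^k − PDHG(z^k)‖_P ≤ (2/(k+1))·dist_P(z^0, Z*), where dist_P(z^0, Z*) = inf_{z*∈Z*} ‖z^0 − z*‖_P. -/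
open Matrix
open scoped BigOperators

namespace StmtAux

variable {n m : ℕ}

lemma dot_self_nonneg {k : ℕ} (x : Fin k → ℝ) : 0 ≤ x ⬝ᵥ x :=
  Finset.sum_nonneg fun _ _ => mul_self_nonneg _

lemma dot_sq_le {k : ℕ} (x y : Fin k → ℝ) : (x ⬝ᵥ y)^2 ≤ (x ⬝ᵥ x) * (y ⬝ᵥ y) := by
  have h := Finset.sum_mul_sq_le_sq_mul_sq Finset.univ x y
  simpa [dotProduct, sq, Finset.mul_sum] using h

lemma nrm_sq {k : ℕ} (x : Fin k → ℝ) : nrm x ^ 2 = x ⬝ᵥ x :=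
  Real.sq_sqrt (dot_self_nonneg x)

lemma nrm_nonneg {k : ℕ} (x : Fin k → ℝ) : 0 ≤ nrm x := Real.sqrt_nonneg _

lemma spec_bound (A : Matrix (Fin m) (Fin n) ℝ) (x : Fin n → ℝ) :
    nrm (A *ᵥ x) ≤ specNorm A * nrm x := by
  have hbdd : BddAbove {r | ∃ x : Fin n → ℝ, nrm x = 1 ∧ r = nrm (A *ᵥ x)} := by
    refine ⟨Real.sqrt (∑ i, (fun j => A i j) ⬝ᵥ (fun j => A i j)), ?_⟩
    rintro r ⟨u, hu, rfl⟩
    have hu1 : u ⬝ᵥ u = 1 := by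
      have := nrm_sq u
      rw [hu] at this; linarith
    have hterm : ∀ i : Fin m, ((fun j => A i j) ⬝ᵥ u) * ((fun j => A i j) ⬝ᵥ u)
        ≤ (fun j => A i j) ⬝ᵥ (fun j => A i j) := by
      intro i
      have := dot_sq_le (fun j => A i j) u
      rw [hu1, mul_one] at this
      nlinarith [this]
    have hAx : (A *ᵥ u) ⬝ᵥ (A *ᵥ u) ≤ ∑ i, (fun j => A i j) ⬝ᵥ (fun j => A i j) := by
      simp only [dotProduct, Matrix.mulVec]
      exact Finset.sum_le_sum fun i _ => hterm i
    exact Real.sqrt_le_sqrt hAx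
  rcases eq_or_ne x 0 with rfl | hx
  · simp [nrm, Matrix.mulVec_zero, dotProduct]
  · have hxx : 0 < x ⬝ᵥ x := by
      rcases Function.ne_iff.mp hx with ⟨i, hi⟩
      have h1 : 0 < x i * x i := mul_self_pos.mpr hi
      have hle : x i * x i ≤ x ⬝ᵥ x := by
        have := Finset.single_le_sum (f := fun j => x j * x j)
          (fun j _ => mul_self_nonneg _) (Finset.mem_univ i)
        simpa [dotProduct] using this
      linarith
    have hnx : 0 < nrm x := Real.sqrt_pos.mpr hxx
    set u := (nrm x)⁻¹ • x with hu
    have hnu : nrm u = 1 := by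
      have h2 : u ⬝ᵥ u = ((nrm x)⁻¹)^2 * (x ⬝ᵥ x) := by
        simp [hu, smul_dotProduct, dotProduct_smul, smul_eq_mul]; ring
      rw [nrm, h2, ← nrm_sq x]
      rw [show ((nrm x)⁻¹)^2 * (nrm x)^2 = 1 by field_simp]
      exact Real.sqrt_one
    have hmem : nrm (A *ᵥ u) ∈ {r | ∃ x : Fin n → ℝ, nrm x = 1 ∧ r = nrm (A *ᵥ x)} :=
      ⟨u, hnu, rfl⟩
    have hle : nrm (A *ᵥ u) ≤ specNorm A := le_csSup hbdd hmem
    have hAu : A *ᵥ u = (nrm x)⁻¹ • (A *ᵥ x) := by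
      rw [hu, Matrix.mulVec_smul]
    have hnA : nrm (A *ᵥ u) = (nrm x)⁻¹ * nrm (A *ᵥ x) := by
      rw [hAu, nrm]
      have h3 : ((nrm x)⁻¹ • (A *ᵥ x)) ⬝ᵥ ((nrm x)⁻¹ • (A *ᵥ x))
          = ((nrm x)⁻¹)^2 * ((A *ᵥ x) ⬝ᵥ (A *ᵥ x)) := by
        simp [smul_dotProduct, dotProduct_smul, smul_eq_mul]; ring
      rw [h3, Real.sqrt_mul (sq_nonneg _), Real.sqrt_sq (by positivity)]
      rfl
    rw [hnA] at hle
    calc nrm (A *ᵥ x) = nrm x * ((nrm x)⁻¹ * nrm (A *ᵥ x)) := by field_simp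
    _ ≤ nrm x * specNorm A := by
        apply mul_le_mul_of_nonneg_left hle (le_of_lt hnx)
    _ = specNorm A * nrm x := mul_comm _ _

/-- The bilinear form associated to `P`. -/
noncomputable def Pinner (A : Matrix (Fin m) (Fin n) ℝ) (η : ℝ)
    (w v : (Fin n → ℝ) × (Fin m → ℝ)) : ℝ :=
  (1 / η) * (w.1 ⬝ᵥ v.1) + w.2 ⬝ᵥ (A *ᵥ v.1) + v.2 ⬝ᵥ (A *ᵥ w.1) + (1 / η) * (w.2 ⬝ᵥ v.2)

variable (A : Matrix (Fin m) (Fin n) ℝ) (η : ℝ)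

lemma Pquad_eq (w : (Fin n → ℝ) × (Fin m → ℝ)) : Pquad A η w = Pinner A η w w := by
  simp [Pquad, Pinner]; ring

lemma Pinner_comm (w v : (Fin n → ℝ) × (Fin m → ℝ)) :
    Pinner A η w v = Pinner A η v w := by
  simp [Pinner, dotProduct_comm w.1 v.1, dotProduct_comm w.2 v.2]; ring

lemma Pinner_add_left (u v w : (Fin n → ℝ) × (Fin m → ℝ)) :
    Pinner A η (u + v) w = Pinner A η u w + Pinner A η v w := by
  simp [Pinner, add_dotProduct, dotProduct_add, Matrix.mulVec_add, Prod.fst_add, Prod.snd_add]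
  ring

lemma Pinner_sub_left (u v w : (Fin n → ℝ) × (Fin m → ℝ)) :
    Pinner A η (u - v) w = Pinner A η u w - Pinner A η v w := by
  simp [Pinner, sub_dotProduct, dotProduct_sub, Matrix.mulVec_sub, Prod.fst_sub, Prod.snd_sub]
  ring

lemma Pinner_smul_left (r : ℝ) (u w : (Fin n → ℝ) × (Fin m → ℝ)) :
    Pinner A η (r • u) w = r * Pinner A η u w := by
  simp [Pinner, smul_dotProduct, dotProduct_smul, Matrix.mulVec_smul, Prod.smul_fst,
    Prod.smul_snd, smul_eq_mul]
  ring

lemma Pinner_add_right (u v w : (Fin n → ℝ) × (Fin m → ℝ)) :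
    Pinner A η u (v + w) = Pinner A η u v + Pinner A η u w := by
  rw [Pinner_comm, Pinner_add_left, Pinner_comm A η v u, Pinner_comm A η w u]

lemma Pinner_sub_right (u v w : (Fin n → ℝ) × (Fin m → ℝ)) :
    Pinner A η u (v - w) = Pinner A η u v - Pinner A η u w := by
  rw [Pinner_comm, Pinner_sub_left, Pinner_comm A η v u, Pinner_comm A η w u]

lemma Pinner_smul_right (r : ℝ) (u w : (Fin n → ℝ) × (Fin m → ℝ)) :
    Pinner A η u (r • w) = r * Pinner A η u w := by
  rw [Pinner_comm, Pinner_smul_left, Pinner_comm]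

lemma Pinner_zero_right (u : (Fin n → ℝ) × (Fin m → ℝ)) : Pinner A η u 0 = 0 := by
  simp [Pinner]

lemma Pquad_sub_expand (v u : (Fin n → ℝ) × (Fin m → ℝ)) :
    Pquad A η (v - u) = Pquad A η v - 2 * Pinner A η v u + Pquad A η u := by
  rw [Pquad_eq, Pquad_eq, Pquad_eq, Pinner_sub_left, Pinner_sub_right, Pinner_sub_right,
    Pinner_comm A η u v]
  ring

lemma Pquad_add_expand (u w : (Fin n → ℝ) × (Fin m → ℝ)) (t : ℝ) :
    Pquad A η (u + t • w) = Pquad A η u + (2 * Pinner A η u w) * t + Pquad A η w * (t * t) := by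
  rw [Pquad_eq, Pquad_eq, Pquad_eq, Pinner_add_left, Pinner_add_right, Pinner_add_right,
    Pinner_smul_left, Pinner_smul_left, Pinner_smul_right, Pinner_smul_right,
    Pinner_comm A η w u]
  ring

lemma Pquad_nonneg (hη0 : 0 < η) (hη : η < 1 / specNorm A)
    (w : (Fin n → ℝ) × (Fin m → ℝ)) : 0 ≤ Pquad A η w := by
  set S := specNorm A with hS
  have hSpos : 0 < S := by
    by_contra h
    push_neg at h
    have h0 : 1 / S ≤ 0 := by
      rcases lt_or_eq_of_le h with h' | h'
      · exact le_of_lt (by exact div_neg_of_pos_of_neg one_pos h')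
      · rw [h']; norm_num
    linarith
  have hηS : η * S < 1 := by
    have := (lt_div_iff₀ hSpos).mp hη
    linarith
  have hSle : S ≤ 1 / η := by
    rw [le_div_iff₀ hη0]; nlinarith
  set X := w.1 ⬝ᵥ w.1 with hX
  set Y := w.2 ⬝ᵥ w.2 with hY
  set t := w.2 ⬝ᵥ (A *ᵥ w.1) with ht
  have hX0 : 0 ≤ X := dot_self_nonneg _
  have hY0 : 0 ≤ Y := dot_self_nonneg _
  have h1 : t^2 ≤ Y * ((A *ᵥ w.1) ⬝ᵥ (A *ᵥ w.1)) := dot_sq_le w.2 (A *ᵥ w.1)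
  have h2 : (A *ᵥ w.1) ⬝ᵥ (A *ᵥ w.1) ≤ S^2 * X := by
    have hb := spec_bound A w.1
    have hn1 := nrm_sq (A *ᵥ w.1)
    have hx2 := nrm_sq w.1
    nlinarith [nrm_nonneg (A *ᵥ w.1), nrm_nonneg w.1, mul_nonneg hSpos.le (nrm_nonneg w.1)]
  have ht2 : t^2 ≤ S^2 * X * Y := by nlinarith
  have h5 : S * (X + Y) ≤ (1/η) * (X + Y) :=
    mul_le_mul_of_nonneg_right hSle (add_nonneg hX0 hY0)
  have h7 : (S*(X+Y))^2 ≤ ((1/η)*(X+Y))^2 :=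
    pow_le_pow_left₀ (mul_nonneg hSpos.le (add_nonneg hX0 hY0)) h5 2
  have h8 : (2*t)^2 ≤ (S*(X+Y))^2 := by
    nlinarith [mul_nonneg (sq_nonneg S) (sq_nonneg (X-Y))]
  have h6 : (2*t)^2 ≤ ((1/η)*(X+Y))^2 := le_trans h8 h7
  have hu : 0 ≤ (1/η)*(X+Y) := le_trans (mul_nonneg hSpos.le (add_nonneg hX0 hY0)) h5
  have habs : |2*t| ≤ (1/η)*(X+Y) := by
    calc |2*t| = Real.sqrt ((2*t)^2) := (Real.sqrt_sq_eq_abs _).symm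
    _ ≤ Real.sqrt (((1/η)*(X+Y))^2) := Real.sqrt_le_sqrt h6
    _ = (1/η)*(X+Y) := Real.sqrt_sq hu
  show 0 ≤ (1/η) * X + 2 * t + (1/η) * Y
  have := neg_abs_le (2*t)
  linarith

lemma Pinner_CS (hη0 : 0 < η) (hη : η < 1 / specNorm A)
    (u w : (Fin n → ℝ) × (Fin m → ℝ)) :
    Pinner A η u w ≤ Real.sqrt (Pquad A η u) * Real.sqrt (Pquad A η w) := by
  have hpsd : ∀ t : ℝ, 0 ≤ Pquad A η w * (t * t) + (2 * Pinner A η u w) * t + Pquad A η u := by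
    intro t
    have h := Pquad_nonneg A η hη0 hη (u + t • w)
    rw [Pquad_add_expand] at h
    linarith
  have hd := discrim_le_zero hpsd
  have hd' : (Pinner A η u w)^2 ≤ Pquad A η u * Pquad A η w := by
    unfold discrim at hd; nlinarith
  calc Pinner A η u w ≤ |Pinner A η u w| := le_abs_self _
  _ = Real.sqrt ((Pinner A η u w)^2) := (Real.sqrt_sq_eq_abs _).symm
  _ ≤ Real.sqrt (Pquad A η u * Pquad A η w) := Real.sqrt_le_sqrt hd'
  _ = Real.sqrt (Pquad A η u) * Real.sqrt (Pquad A η w) :=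
      Real.sqrt_mul (Pquad_nonneg A η hη0 hη u) _

lemma posPt_nonneg {k : ℕ} (v : Fin k → ℝ) (i : Fin k) : 0 ≤ posPt v i := le_max_right _ _

lemma proj_ineq {k : ℕ} (v u : Fin k → ℝ) (hu : ∀ i, 0 ≤ u i) :
    (v - posPt v) ⬝ᵥ (u - posPt v) ≤ 0 := by
  apply Finset.sum_nonpos
  intro i _
  simp only [Pi.sub_apply, posPt]
  rcases le_or_gt (v i) 0 with h | h
  · rw [max_eq_right h]
    simpa using mul_nonpos_of_nonpos_of_nonneg (by linarith) (by simpa using hu i)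
  · rw [max_eq_left h.le]
    simp

variable (b : Fin m → ℝ) (c : Fin n → ℝ)

lemma key_E (hη0 : 0 < η) (x p : Fin n → ℝ) (y q : Fin m → ℝ) :
    0 ≤ Pinner A η
      (((x, y) - pdhgStep A b c η (x, y)) - ((p, q) - pdhgStep A b c η (p, q)))
      (pdhgStep A b c η (x, y) - pdhgStep A b c η (p, q)) := by
  have hne : η ≠ 0 := ne_of_gt hη0
  set v : Fin n → ℝ := x + η • (Aᵀ *ᵥ y) - η • c with hv
  set s : Fin n → ℝ := p + η • (Aᵀ *ᵥ q) - η • c with hs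
  set x' : Fin n → ℝ := posPt v with hx'
  set p' : Fin n → ℝ := posPt s with hp'
  set y' : Fin m → ℝ := y - η • (A *ᵥ ((2:ℝ) • x' - x)) + η • b with hy'
  set q' : Fin m → ℝ := q - η • (A *ᵥ ((2:ℝ) • p' - p)) + η • b with hq'
  have hTz : pdhgStep A b c η (x, y) = (x', y') := rfl
  have hTw : pdhgStep A b c η (p, q) = (p', q') := rfl
  rw [hTz, hTw]
  set a1 : Fin n → ℝ := (x - x') - (p - p') with ha1def
  set a2 : Fin m → ℝ := (y - y') - (q - q') with ha2def
  set b1 : Fin n → ℝ := x' - p' with hb1def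
  set b2 : Fin m → ℝ := y' - q' with hb2def
  have hE : Pinner A η (((x, y) - (x', y')) - ((p, q) - (p', q'))) ((x', y') - (p', q'))
      = (1/η) * (a1 ⬝ᵥ b1) + a2 ⬝ᵥ (A *ᵥ b1) + b2 ⬝ᵥ (A *ᵥ a1) + (1/η) * (a2 ⬝ᵥ b2) := rfl
  rw [hE]
  set u : Fin n → ℝ := (2:ℝ) • b1 - (x - p) with hu
  set D : Fin n → ℝ := (v - x') - (s - p') with hD
  have ha2 : a2 = η • (A *ᵥ u) := by
    rw [ha2def, hy', hq', hu, hb1def]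
    simp only [Matrix.mulVec_sub, Matrix.mulVec_add, Matrix.mulVec_smul, smul_sub, smul_add]
    module
  have hsum : a2 + b2 = y - q := by rw [ha2def, hb2def]; abel
  have ha1 : a1 = (x - p) - b1 := by rw [ha1def, hb1def]; abel
  have hDa : D = a1 + η • (Aᵀ *ᵥ (y - q)) := by
    rw [hD, hv, hs, ha1def]
    simp only [Matrix.mulVec_sub, Matrix.mulVec_add, Matrix.mulVec_smul, smul_sub, smul_add]
    module
  have t1 : (1/η) * (a2 ⬝ᵥ b2) = 2 * (b2 ⬝ᵥ (A *ᵥ b1)) - b2 ⬝ᵥ (A *ᵥ (x - p)) := by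
    rw [ha2, hu, smul_dotProduct, Matrix.mulVec_sub, Matrix.mulVec_smul, sub_dotProduct,
      smul_dotProduct, smul_eq_mul, smul_eq_mul]
    rw [dotProduct_comm (A *ᵥ b1) b2, dotProduct_comm (A *ᵥ (x - p)) b2]
    field_simp
  have t2 : b2 ⬝ᵥ (A *ᵥ a1) = b2 ⬝ᵥ (A *ᵥ (x - p)) - b2 ⬝ᵥ (A *ᵥ b1) := by
    rw [ha1, Matrix.mulVec_sub, dotProduct_sub]
  have t3 : (1/η) * (D ⬝ᵥ b1) = (1/η) * (a1 ⬝ᵥ b1) + (y - q) ⬝ᵥ (A *ᵥ b1) := by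
    rw [hDa, add_dotProduct, smul_dotProduct, smul_eq_mul,
      Matrix.mulVec_transpose, ← Matrix.dotProduct_mulVec]
    field_simp
  have t4 : a2 ⬝ᵥ (A *ᵥ b1) + b2 ⬝ᵥ (A *ᵥ b1) = (y - q) ⬝ᵥ (A *ᵥ b1) := by
    rw [← add_dotProduct, hsum]
  have key : (1/η) * (a1 ⬝ᵥ b1) + a2 ⬝ᵥ (A *ᵥ b1) + b2 ⬝ᵥ (A *ᵥ a1) + (1/η) * (a2 ⬝ᵥ b2)
      = (1/η) * (D ⬝ᵥ b1) := by
    rw [t1, t2, t3, ← t4]; ring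
  rw [key]
  have h1 : (v - x') ⬝ᵥ (p' - x') ≤ 0 := by
    rw [hx']; exact proj_ineq v p' (fun i => by rw [hp']; exact posPt_nonneg s i)
  have h2 : (s - p') ⬝ᵥ (x' - p') ≤ 0 := by
    rw [hp']; exact proj_ineq s x' (fun i => by rw [hx']; exact posPt_nonneg v i)
  have h3 : (v - x') ⬝ᵥ (p' - x') = -((v - x') ⬝ᵥ b1) := by
    rw [hb1def, show p' - x' = -(x' - p') by abel, dotProduct_neg]
  have hDb : 0 ≤ D ⬝ᵥ b1 := by
    rw [hD, sub_dotProduct]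
    rw [h3] at h1
    rw [← hb1def] at h2
    linarith
  positivity

lemma coco (hη0 : 0 < η) (zz ww : (Fin n → ℝ) × (Fin m → ℝ)) :
    Pquad A η ((zz - pdhgStep A b c η zz) - (ww - pdhgStep A b c η ww)) ≤
      Pinner A η ((zz - pdhgStep A b c η zz) - (ww - pdhgStep A b c η ww)) (zz - ww) := by
  have hE := key_E A η b c hη0 zz.1 ww.1 zz.2 ww.2
  simp only [Prod.mk.eta] at hE
  have heq : (zz - ww) - ((zz - pdhgStep A b c η zz) - (ww - pdhgStep A b c η ww))
      = pdhgStep A b c η zz - pdhgStep A b c η ww := by abel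
  have h2 : Pinner A η ((zz - pdhgStep A b c η zz) - (ww - pdhgStep A b c η ww)) (zz - ww)
      - Pquad A η ((zz - pdhgStep A b c η zz) - (ww - pdhgStep A b c η ww))
      = Pinner A η ((zz - pdhgStep A b c η zz) - (ww - pdhgStep A b c η ww))
        (pdhgStep A b c η zz - pdhgStep A b c η ww) := by
    rw [Pquad_eq, ← Pinner_sub_right, heq]
  linarith

lemma Pinner_neg_right (u v : (Fin n → ℝ) × (Fin m → ℝ)) :
    Pinner A η u (-v) = - Pinner A η u v := by
  rw [show -v = (0 : (Fin n → ℝ) × (Fin m → ℝ)) - v by abel, Pinner_sub_right,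
    Pinner_zero_right]
  ring

lemma halpern_step (Qu Qv Ivu Ivd Iud kk : ℝ) (hk : 0 ≤ kk)
    (hih : kk * (kk+1)/2 * Qu + (kk+1) * Iud ≤ 0)
    (hA : (kk+2) * (Qv - 2*Ivu + Qu) ≤ -(Ivd - Iud) - (kk+1) * (Ivu - Qu))
    (hQvu : 0 ≤ Qv - 2*Ivu + Qu) :
    (kk+1) * (kk+2)/2 * Qv + (kk+1) * Ivd - (kk+1) * Ivu ≤ 0 := by
  have hX : (kk+2) * (Qv - 2*Ivu + Qu) + (Ivd - Iud) + (kk+1) * (Ivu - Qu) ≤ 0 := by linarith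
  have hKX : (kk+1) * ((kk+2) * (Qv - 2*Ivu + Qu) + (Ivd - Iud) + (kk+1) * (Ivu - Qu)) ≤ 0 :=
    mul_nonpos_of_nonneg_of_nonpos (by linarith) hX
  have hQs : 0 ≤ ((kk+1)*(kk+2)/2) * (Qv - 2*Ivu + Qu) :=
    mul_nonneg (by nlinarith) hQvu
  nlinarith [hKX, hQs, hih]

end StmtAux


/-- Halpern PDHG, `zᵏ⁺¹ = ((k+1)/(k+2))·PDHG(zᵏ) + (1/(k+2))·z⁰`, with
`η < 1/‖A‖₂` and nonempty fixed-point set `Z*`, satisfies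
`‖zᵏ − PDHG(zᵏ)‖_P ≤ (2/(k+1))·dist_P(z⁰, Z*)` for every `k ≥ 1`. -/
theorem stmt8 {n m : ℕ} (A : Matrix (Fin m) (Fin n) ℝ) (b : Fin m → ℝ) (c : Fin n → ℝ)
    (η : ℝ) (hη0 : 0 < η) (hη : η < 1 / specNorm A)
    (z : ℕ → (Fin n → ℝ) × (Fin m → ℝ))
    (hiter : ∀ k : ℕ, z (k + 1) =
      (((k : ℝ) + 1) / ((k : ℝ) + 2)) • pdhgStep A b c η (z k) + (1 / ((k : ℝ) + 2)) • z 0)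
    (hfix : {w : (Fin n → ℝ) × (Fin m → ℝ) | pdhgStep A b c η w = w}.Nonempty) :
    ∀ k : ℕ, 1 ≤ k →
      Pnorm A η (z k - pdhgStep A b c η (z k)) ≤
        (2 / ((k : ℝ) + 1)) *
          distP A η (z 0) {w : (Fin n → ℝ) × (Fin m → ℝ) | pdhgStep A b c η w = w} := by
  classical
  have hQnn : ∀ w, 0 ≤ Pquad A η w := StmtAux.Pquad_nonneg A η hη0 hη
  have hCS : ∀ u w, StmtAux.Pinner A η u w ≤
      Real.sqrt (Pquad A η u) * Real.sqrt (Pquad A η w) := StmtAux.Pinner_CS A η hη0 hη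
  have hcoco := StmtAux.coco A η b c hη0
  -- Potential: C_j ≤ 0 for all j
  have hC : ∀ j : ℕ, ((j:ℝ) * ((j:ℝ)+1) / 2) * Pquad A η (z j - pdhgStep A b c η (z j))
      + ((j:ℝ)+1) * StmtAux.Pinner A η (z j - pdhgStep A b c η (z j)) (z j - z 0) ≤ 0 := by
    intro j
    induction j with
    | zero =>
      norm_num [sub_self, StmtAux.Pinner_zero_right]
    | succ k ih =>
      push_cast
      have hk0 : (0:ℝ) ≤ (k:ℝ) := Nat.cast_nonneg k
      have hk2 : ((k:ℝ) + 2) ≠ 0 := by positivity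
      have hs1 : ((k:ℝ)+2) • z (k+1) = ((k:ℝ)+1) • pdhgStep A b c η (z k) + z 0 := by
        rw [hiter k, smul_add, smul_smul, smul_smul]
        rw [show ((k:ℝ)+2) * (((k:ℝ)+1)/((k:ℝ)+2)) = (k:ℝ)+1 by field_simp]
        rw [show ((k:ℝ)+2) * (1/((k:ℝ)+2)) = 1 by field_simp]
        rw [one_smul]
      have hd1 : ((k:ℝ)+2) • (z (k+1) - z k)
          = (z 0 - z k) - ((k:ℝ)+1) • (z k - pdhgStep A b c η (z k)) := by
        rw [smul_sub, hs1]; module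
      have hd2 : ((k:ℝ)+2) • (z (k+1) - z 0)
          = ((k:ℝ)+1) • ((z k - z 0) - (z k - pdhgStep A b c η (z k))) := by
        rw [smul_sub, hs1]; module
      have hco := hcoco (z (k+1)) (z k)
      have hA1 : ((k:ℝ)+2) * Pquad A η ((z (k+1) - pdhgStep A b c η (z (k+1)))
            - (z k - pdhgStep A b c η (z k)))
          ≤ StmtAux.Pinner A η ((z (k+1) - pdhgStep A b c η (z (k+1)))
            - (z k - pdhgStep A b c η (z k))) (((k:ℝ)+2) • (z (k+1) - z k)) := by
        rw [StmtAux.Pinner_smul_right]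
        have h2 : (0:ℝ) ≤ (k:ℝ)+2 := by positivity
        exact mul_le_mul_of_nonneg_left hco h2
      rw [hd1] at hA1
      have hA2 : StmtAux.Pinner A η ((z (k+1) - pdhgStep A b c η (z (k+1)))
            - (z k - pdhgStep A b c η (z k)))
            ((z 0 - z k) - ((k:ℝ)+1) • (z k - pdhgStep A b c η (z k)))
          = -(StmtAux.Pinner A η (z (k+1) - pdhgStep A b c η (z (k+1))) (z k - z 0)
              - StmtAux.Pinner A η (z k - pdhgStep A b c η (z k)) (z k - z 0))
            - ((k:ℝ)+1) * (StmtAux.Pinner A η (z (k+1) - pdhgStep A b c η (z (k+1)))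
              (z k - pdhgStep A b c η (z k))
              - Pquad A η (z k - pdhgStep A b c η (z k))) := by
        rw [StmtAux.Pinner_sub_right, StmtAux.Pinner_smul_right,
          StmtAux.Pinner_sub_left A η (z (k+1) - pdhgStep A b c η (z (k+1)))
            (z k - pdhgStep A b c η (z k)) (z 0 - z k),
          StmtAux.Pinner_sub_left A η (z (k+1) - pdhgStep A b c η (z (k+1)))
            (z k - pdhgStep A b c η (z k)) (z k - pdhgStep A b c η (z k)),
          show z 0 - z k = -(z k - z 0) by abel,
          StmtAux.Pinner_neg_right, StmtAux.Pinner_neg_right, ← StmtAux.Pquad_eq]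
        ring
      rw [hA2] at hA1
      rw [StmtAux.Pquad_sub_expand] at hA1
      have hQvu : 0 ≤ Pquad A η (z (k+1) - pdhgStep A b c η (z (k+1)))
          - 2 * StmtAux.Pinner A η (z (k+1) - pdhgStep A b c η (z (k+1)))
            (z k - pdhgStep A b c η (z k))
          + Pquad A η (z k - pdhgStep A b c η (z k)) := by
        rw [← StmtAux.Pquad_sub_expand]
        exact hQnn _
      have habs := StmtAux.halpern_step
        (Pquad A η (z k - pdhgStep A b c η (z k)))
        (Pquad A η (z (k+1) - pdhgStep A b c η (z (k+1))))
        (StmtAux.Pinner A η (z (k+1) - pdhgStep A b c η (z (k+1)))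
          (z k - pdhgStep A b c η (z k)))
        (StmtAux.Pinner A η (z (k+1) - pdhgStep A b c η (z (k+1))) (z k - z 0))
        (StmtAux.Pinner A η (z k - pdhgStep A b c η (z k)) (z k - z 0))
        (k:ℝ) hk0 ih (by linarith) hQvu
      have heq : (((k:ℝ)+1)+1) * StmtAux.Pinner A η
            (z (k+1) - pdhgStep A b c η (z (k+1))) (z (k+1) - z 0)
          = ((k:ℝ)+1) * (StmtAux.Pinner A η (z (k+1) - pdhgStep A b c η (z (k+1))) (z k - z 0)
            - StmtAux.Pinner A η (z (k+1) - pdhgStep A b c η (z (k+1)))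
              (z k - pdhgStep A b c η (z k))) := by
        have h9 : (((k:ℝ)+1)+1) * StmtAux.Pinner A η
              (z (k+1) - pdhgStep A b c η (z (k+1))) (z (k+1) - z 0)
            = StmtAux.Pinner A η (z (k+1) - pdhgStep A b c η (z (k+1)))
              (((k:ℝ)+2) • (z (k+1) - z 0)) := by
          rw [StmtAux.Pinner_smul_right]; ring
        rw [h9, hd2, StmtAux.Pinner_smul_right, StmtAux.Pinner_sub_right]
      linarith [habs, heq]
  -- Final bound
  intro k hk
  have hk1 : (0:ℝ) < (k:ℝ) + 1 := by positivity
  have hper : ∀ w ∈ {w : (Fin n → ℝ) × (Fin m → ℝ) | pdhgStep A b c η w = w},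
      ((k:ℝ)+1)/2 * Pnorm A η (z k - pdhgStep A b c η (z k)) ≤ Pnorm A η (z 0 - w) := by
    intro w hw
    have hwfix : pdhgStep A b c η w = w := hw
    have hco := hcoco (z k) w
    rw [hwfix, sub_self, sub_zero] at hco
    have hCk := hC k
    have hsplit : StmtAux.Pinner A η (z k - pdhgStep A b c η (z k)) (z k - z 0)
        = StmtAux.Pinner A η (z k - pdhgStep A b c η (z k)) (z k - w)
          - StmtAux.Pinner A η (z k - pdhgStep A b c η (z k)) (z 0 - w) := by
      rw [← StmtAux.Pinner_sub_right, show (z k - w) - (z 0 - w) = z k - z 0 by abel]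
    rw [hsplit] at hCk
    have f3 : StmtAux.Pinner A η (z k - pdhgStep A b c η (z k)) (z 0 - w)
        ≤ Pnorm A η (z k - pdhgStep A b c η (z k)) * Pnorm A η (z 0 - w) := hCS _ _
    have f4 : Pquad A η (z k - pdhgStep A b c η (z k))
        = Pnorm A η (z k - pdhgStep A b c η (z k))^2 := (Real.sq_sqrt (hQnn _)).symm
    have f5 : 0 ≤ Pnorm A η (z k - pdhgStep A b c η (z k)) := Real.sqrt_nonneg _
    have f6 : 0 ≤ Pnorm A η (z 0 - w) := Real.sqrt_nonneg _
    have hk0 : (0:ℝ) ≤ (k:ℝ) := Nat.cast_nonneg k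
    rcases eq_or_lt_of_le f5 with h0 | h0
    · rw [← h0, mul_zero]
      exact f6
    · rw [f4] at hCk hco
      have s1 := mul_le_mul_of_nonneg_left hco (le_of_lt hk1)
      have s2 := mul_le_mul_of_nonneg_left f3 (le_of_lt hk1)
      have hpos : 0 ≤ (((k:ℝ)+1)/2) * Pnorm A η (z k - pdhgStep A b c η (z k)) ^ 2 := by
        positivity
      have hbig : (((k:ℝ)+1) * Pnorm A η (z k - pdhgStep A b c η (z k)))
          * (((k:ℝ)+1)/2 * Pnorm A η (z k - pdhgStep A b c η (z k)))
          ≤ (((k:ℝ)+1) * Pnorm A η (z k - pdhgStep A b c η (z k))) * Pnorm A η (z 0 - w) := by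
        nlinarith [hCk, s1, s2, hpos]
      exact le_of_mul_le_mul_left hbig (mul_pos hk1 h0)
  have hinf : ((k:ℝ)+1)/2 * Pnorm A η (z k - pdhgStep A b c η (z k))
      ≤ distP A η (z 0) {w : (Fin n → ℝ) × (Fin m → ℝ) | pdhgStep A b c η w = w} := by
    show ((k:ℝ)+1)/2 * Pnorm A η (z k - pdhgStep A b c η (z k))
      ≤ sInf ((fun w => Pnorm A η (z 0 - w)) ''
        {w : (Fin n → ℝ) × (Fin m → ℝ) | pdhgStep A b c η w = w})
    apply le_csInf (hfix.image _)
    rintro r ⟨w, hw, rfl⟩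
    exact hper w hw
  have hfinal := mul_le_mul_of_nonneg_left hinf
    (show (0:ℝ) ≤ 2/((k:ℝ)+1) by positivity)
  calc Pnorm A η (z k - pdhgStep A b c η (z k))
      = 2/((k:ℝ)+1) * (((k:ℝ)+1)/2 * Pnorm A η (z k - pdhgStep A b c η (z k))) := by
        field_simp
    _ ≤ 2/((k:ℝ)+1) * distP A η (z 0)
        {w : (Fin n → ℝ) × (Fin m → ℝ) | pdhgStep A b c η w = w} := hfinal
end

section
/- Let {z^k} be reflected Halpern PDHG iterates, z^{k+1} = ((k+1)/(k+2))·(2·PDHG(z^k) − z^k) + (1/(k+2))·z^0, with step-size η < 1/‖A‖₂, and assume the fixed-point set Z* := {z* : PDHG(z*) = z*} is nonempty. Then for every k ≥ 1, ‖z^k − PDHG(z^k)‖_P ≤ (1/(k+1))·dist_P(z^0, Z*), where dist_P(z^0, Z*) = inf_{z*∈Z*} ‖z^0 − z*‖_P. -/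
open Matrix
open scoped BigOperators

/-!
PDHG is firmly nonexpansive in the `P`-seminorm: `P (z - PDHG z)` is a value of the monotone
KKT operator at `PDHG z`, whose skew part `(-Aᵀ y, A x)` pairs to zero, so only the monotonicity
of the projection onto `ℝ₊ⁿ` remains. For any firmly nonexpansive `T`, the reflected Halpern
iteration keeps the potential `k ‖eₖ‖²_P ≤ ⟨eₖ, z⁰ - zᵏ⟩_P` with `eₖ = zᵏ - T zᵏ`; adding
`‖eₖ‖²_P ≤ ⟨eₖ, zᵏ - z*⟩_P` for a fixed point `z*` and applying Cauchy–Schwarz gives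
`(k + 1) ‖eₖ‖_P ≤ ‖z⁰ - z*‖_P`.
-/

section FirmlyNonexpansive

variable {E : Type*} [AddCommGroup E] [Module ℝ E] {B : LinearMap.BilinForm ℝ E}

theorem LinearMap.BilinForm.IsPosSemidef.apply_le_sqrt_mul_sqrt (hB : B.IsPosSemidef)
    (x y : E) : B x y ≤ √(B x x) * √(B y y) := by
  rw [← Real.sqrt_mul (hB.nonneg x)]
  exact (le_abs_self _).trans (Real.abs_le_sqrt
    (B.apply_sq_le_of_symm hB.nonneg (LinearMap.BilinForm.isSymm_iff.mp hB.isSymm) x y))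

variable (B) in
def IsFirmlyNonexpansive (T : E → E) : Prop :=
  ∀ u v, 0 ≤ B ((u - T u) - (v - T v)) (T u - T v)

variable {T : E → E}

theorem IsFirmlyNonexpansive.apply_residual_le (hT : IsFirmlyNonexpansive B T) (hs : B.IsSymm)
    (u v : E) :
    B ((u - T u) - (v - T v)) ((u - T u) - (v - T v)) ≤ B (u - v) ((u - T u) - (v - T v)) := by
  have h := hT u v
  rw [show T u - T v = (u - v) - ((u - T u) - (v - T v)) by abel, map_sub,
    hs.eq (u - T u - (v - T v)) (u - v)] at h
  simpa using h

theorem IsFirmlyNonexpansive.apply_residual_le_of_fixed (hT : IsFirmlyNonexpansive B T)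
    (hs : B.IsSymm) {w : E} (hw : T w = w) (u : E) :
    B (u - T u) (u - T u) ≤ B (u - w) (u - T u) := by
  simpa [hw] using hT.apply_residual_le hs u w

end FirmlyNonexpansive

section Halpern

variable {E : Type*} [AddCommGroup E] [Module ℝ E] {B : LinearMap.BilinForm ℝ E} {T : E → E}
  {z : ℕ → E}

def IsReflectedHalpernSeq (T : E → E) (z : ℕ → E) : Prop :=
  ∀ k : ℕ, z (k + 1) =
    (((k : ℝ) + 1) / ((k : ℝ) + 2)) • ((2 : ℝ) • T (z k) - z k) + (1 / ((k : ℝ) + 2)) • z 0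

theorem IsReflectedHalpernSeq.smul_sub_eq (hz : IsReflectedHalpernSeq T z) (k : ℕ) :
    ((k : ℝ) + 2) • (z (k + 1) - z k) = (-(2 * ((k : ℝ) + 1))) • (z k - T (z k)) + (z 0 - z k) ∧
    ((k : ℝ) + 2) • (z 0 - z (k + 1)) =
      ((k : ℝ) + 1) • ((z 0 - z k) + (2 : ℝ) • (z k - T (z k))) := by
  constructor <;> rw [hz k] <;> match_scalars <;> field_simp <;> ring

/-- The induction step of the potential bound, read with `s = zₖ₊₁ - zₖ`, `e, e'` the residuals
at `zₖ, zₖ₊₁` and `d = z⁰ - zₖ`, `d' = z⁰ - zₖ₊₁`. -/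
theorem halpern_potential_succ (hs : B.IsSymm) {k : ℝ} (hk : 0 ≤ k) {e e' d d' s : E}
    (hstep : (k + 2) • s = (-(2 * (k + 1))) • e + d)
    (hdist : (k + 2) • d' = (k + 1) • (d + (2 : ℝ) • e))
    (hfirm : B (e' - e) (e' - e) ≤ B s (e' - e)) (ih : k * B e e ≤ B e d) :
    (k + 1) * B e' e' ≤ B e' d' := by
  have h1 : (k + 2) * B (e' - e) (e' - e) ≤ B ((-(2 * (k + 1))) • e + d) (e' - e) := by
    rw [← hstep, map_smul, LinearMap.smul_apply, smul_eq_mul]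
    exact mul_le_mul_of_nonneg_left hfirm (by linarith)
  have h2 : (k + 2) * B e' d' = (k + 1) * (B e' d + 2 * B e' e) := by
    rw [← smul_eq_mul, ← map_smul, hdist]
    simp only [map_smul, map_add, smul_eq_mul]
  simp only [map_add, map_sub, map_smul, LinearMap.add_apply, LinearMap.sub_apply,
    LinearMap.smul_apply, smul_eq_mul, hs.eq e e', hs.eq d e', hs.eq d e] at h1
  have h3 : (k + 2) * B e' e' ≤ B e' d + 2 * B e' e := by linarith
  have h4 : (k + 2) * ((k + 1) * B e' e') ≤ (k + 2) * B e' d' := by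
    rw [h2, mul_left_comm]
    exact mul_le_mul_of_nonneg_left h3 (by linarith)
  exact le_of_mul_le_mul_left h4 (by linarith)

theorem IsFirmlyNonexpansive.halpern_potential (hT : IsFirmlyNonexpansive B T) (hs : B.IsSymm)
    (hz : IsReflectedHalpernSeq T z) (k : ℕ) :
    k * B (z k - T (z k)) (z k - T (z k)) ≤ B (z k - T (z k)) (z 0 - z k) := by
  induction k with
  | zero => simp
  | succ k ih =>
    obtain ⟨hstep, hdist⟩ := hz.smul_sub_eq k
    push_cast
    exact halpern_potential_succ hs k.cast_nonneg hstep hdist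
      (hT.apply_residual_le hs (z (k + 1)) (z k)) ih

theorem IsFirmlyNonexpansive.halpern_residual_le (hT : IsFirmlyNonexpansive B T)
    (hB : B.IsPosSemidef) (hz : IsReflectedHalpernSeq T z) {w : E} (hw : T w = w) (k : ℕ) :
    ((k : ℝ) + 1) * √(B (z k - T (z k)) (z k - T (z k))) ≤ √(B (z 0 - w) (z 0 - w)) := by
  set e := z k - T (z k)
  have hpot : ((k : ℝ) + 1) * B e e ≤ B e (z 0 - w) := by
    have h1 : (k : ℝ) * B e e ≤ B e (z 0 - z k) := hT.halpern_potential hB.isSymm hz k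
    have h2 : B e e ≤ B e (z k - w) :=
      (hT.apply_residual_le_of_fixed hB.isSymm hw (z k)).trans_eq (hB.isSymm.eq _ _)
    have h3 : B e (z 0 - w) = B e (z 0 - z k) + B e (z k - w) := by
      rw [← map_add]; congr 1; abel
    linarith
  have hcs := hB.apply_le_sqrt_mul_sqrt e (z 0 - w)
  rcases (Real.sqrt_nonneg (B e e)).eq_or_lt with h0 | h0
  · rw [← h0, mul_zero]; exact Real.sqrt_nonneg _
  · refine le_of_mul_le_mul_right ?_ h0
    rw [mul_assoc, Real.mul_self_sqrt (hB.nonneg e)]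
    linarith

end Halpern

section EuclideanNorm

variable {k : ℕ}

theorem nrm_eq_norm_toLp (v : Fin k → ℝ) : nrm v = ‖WithLp.toLp 2 v‖ := by
  simp [nrm, EuclideanSpace.norm_eq, dotProduct, sq]

theorem nrm_sq (v : Fin k → ℝ) : nrm v ^ 2 = v ⬝ᵥ v :=
  Real.sq_sqrt (dotProduct_self_star_nonneg v)

theorem abs_dotProduct_le_nrm_mul_nrm (v w : Fin k → ℝ) : |v ⬝ᵥ w| ≤ nrm v * nrm w := by
  have := abs_real_inner_le_norm (WithLp.toLp 2 w) (WithLp.toLp 2 v)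
  rwa [EuclideanSpace.inner_toLp_toLp, star_trivial, mul_comm, ← nrm_eq_norm_toLp,
    ← nrm_eq_norm_toLp] at this

open scoped Matrix.Norms.L2Operator in
theorem bddAbove_specNorm_set {n : ℕ} (A : Matrix (Fin k) (Fin n) ℝ) :
    BddAbove {r | ∃ x : Fin n → ℝ, nrm x = 1 ∧ r = nrm (A *ᵥ x)} := by
  refine ⟨‖A‖, ?_⟩
  rintro r ⟨x, hx, rfl⟩
  have := Matrix.l2_opNorm_mulVec A (WithLp.toLp 2 x)
  rw [← nrm_eq_norm_toLp x, hx, mul_one] at this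
  exact (nrm_eq_norm_toLp _).trans_le this

theorem nrm_mulVec_le_specNorm_mul {n : ℕ} (A : Matrix (Fin k) (Fin n) ℝ) (x : Fin n → ℝ) :
    nrm (A *ᵥ x) ≤ specNorm A * nrm x := by
  rcases eq_or_ne x 0 with rfl | hx
  · simp [nrm]
  have hpos : 0 < nrm x := by
    rw [nrm_eq_norm_toLp]; exact norm_pos_iff.mpr (by simpa using hx)
  have hunit : nrm ((nrm x)⁻¹ • x) = 1 := by
    rw [nrm_eq_norm_toLp, WithLp.toLp_smul, norm_smul, ← nrm_eq_norm_toLp, norm_inv,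
      Real.norm_of_nonneg hpos.le, inv_mul_cancel₀ hpos.ne']
  have hle : nrm (A *ᵥ ((nrm x)⁻¹ • x)) ≤ specNorm A :=
    le_csSup (bddAbove_specNorm_set A) ⟨_, hunit, rfl⟩
  rw [Matrix.mulVec_smul, nrm_eq_norm_toLp, WithLp.toLp_smul, norm_smul, ← nrm_eq_norm_toLp,
    norm_inv, Real.norm_of_nonneg hpos.le, inv_mul_le_iff₀ hpos] at hle
  linarith

end EuclideanNorm

section PDHG

variable {n m : ℕ} (A : Matrix (Fin m) (Fin n) ℝ) (b : Fin m → ℝ) (c : Fin n → ℝ) (η : ℝ)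

theorem transpose_mulVec_dotProduct (y : Fin m → ℝ) (x : Fin n → ℝ) :
    (Aᵀ *ᵥ y) ⬝ᵥ x = y ⬝ᵥ (A *ᵥ x) := by
  rw [Matrix.mulVec_transpose, Matrix.dotProduct_mulVec]

noncomputable def pdhgForm : LinearMap.BilinForm ℝ ((Fin n → ℝ) × (Fin m → ℝ)) :=
  LinearMap.mk₂ ℝ (fun u w => (Papply A η u).1 ⬝ᵥ w.1 + (Papply A η u).2 ⬝ᵥ w.2)
    (fun u v w => by
      simp only [Papply, Prod.fst_add, Prod.snd_add, Matrix.mulVec_add, smul_add, add_dotProduct]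
      ring)
    (fun r u w => by
      simp only [Papply, Prod.smul_fst, Prod.smul_snd, Matrix.mulVec_smul, smul_comm _ r,
        ← smul_add, smul_dotProduct, smul_eq_mul]
      ring)
    (fun u v w => by simp only [Prod.fst_add, Prod.snd_add, dotProduct_add]; ring)
    (fun r u w => by simp only [Prod.smul_fst, Prod.smul_snd, dotProduct_smul, smul_eq_mul]; ring)

theorem pdhgForm_apply (u w : (Fin n → ℝ) × (Fin m → ℝ)) :
    pdhgForm A η u w = (Papply A η u).1 ⬝ᵥ w.1 + (Papply A η u).2 ⬝ᵥ w.2 := rfl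

theorem pdhgForm_apply_eq (u w : (Fin n → ℝ) × (Fin m → ℝ)) :
    pdhgForm A η u w = (1 / η) * (u.1 ⬝ᵥ w.1 + u.2 ⬝ᵥ w.2) + u.2 ⬝ᵥ (A *ᵥ w.1)
      + w.2 ⬝ᵥ (A *ᵥ u.1) := by
  simp only [pdhgForm_apply, Papply, add_dotProduct, smul_dotProduct, smul_eq_mul,
    transpose_mulVec_dotProduct, dotProduct_comm (A *ᵥ u.1)]
  ring

theorem pdhgForm_self (w : (Fin n → ℝ) × (Fin m → ℝ)) : pdhgForm A η w w = Pquad A η w := by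
  rw [pdhgForm_apply_eq, Pquad]; ring

theorem pdhgForm_isSymm : (pdhgForm A η).IsSymm :=
  ⟨fun u w => by
    rw [pdhgForm_apply_eq, pdhgForm_apply_eq, dotProduct_comm u.1, dotProduct_comm u.2]; ring⟩

variable {η}

theorem pdhgForm_isPosSemidef (hη : 0 < η) (hηA : η * specNorm A ≤ 1) :
    (pdhgForm A η).IsPosSemidef := by
  refine ⟨pdhgForm_isSymm A η, ⟨fun ⟨x, y⟩ => ?_⟩⟩
  have hcs : |y ⬝ᵥ (A *ᵥ x)| ≤ nrm y * (specNorm A * nrm x) :=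
    (abs_dotProduct_le_nrm_mul_nrm y _).trans
      (mul_le_mul_of_nonneg_left (nrm_mulVec_le_specNorm_mul A x) (Real.sqrt_nonneg _))
  have hcross : -(nrm x * nrm y) ≤ η * (y ⬝ᵥ (A *ᵥ x)) := by
    have hxy : 0 ≤ nrm x * nrm y := mul_nonneg (Real.sqrt_nonneg _) (Real.sqrt_nonneg _)
    nlinarith [neg_abs_le (y ⬝ᵥ (A *ᵥ x)), mul_le_mul_of_nonneg_right hηA hxy]
  have hsum : 0 ≤ x ⬝ᵥ x + y ⬝ᵥ y + 2 * (η * (y ⬝ᵥ (A *ᵥ x))) := by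
    rw [← nrm_sq x, ← nrm_sq y]
    nlinarith [sq_nonneg (nrm x - nrm y)]
  rw [pdhgForm_apply_eq]
  have : 0 ≤ (1 / η) * (x ⬝ᵥ x + y ⬝ᵥ y + 2 * (η * (y ⬝ᵥ (A *ᵥ x)))) := by positivity
  convert this using 1
  field_simp
  ring

theorem posPt_residual_monotone {k : ℕ} (v w : Fin k → ℝ) :
    0 ≤ ((v - posPt v) - (w - posPt w)) ⬝ᵥ (posPt v - posPt w) := by
  refine Finset.sum_nonneg fun i _ => ?_
  simp only [posPt, Pi.sub_apply]
  rcases le_total (v i) 0 with hv | hv <;> rcases le_total (w i) 0 with hw | hw <;>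
    simp only [max_eq_left, max_eq_right, hv, hw] <;> nlinarith

theorem Papply_sub_pdhgStep (hη : η ≠ 0) (x : Fin n → ℝ) (y : Fin m → ℝ) :
    Papply A η ((x, y) - pdhgStep A b c η (x, y)) =
      (c - Aᵀ *ᵥ (pdhgStep A b c η (x, y)).2
          + (1 / η) • ((x + η • (Aᵀ *ᵥ y) - η • c) - (pdhgStep A b c η (x, y)).1),
        A *ᵥ (pdhgStep A b c η (x, y)).1 - b) := by
  ext i <;>
  · simp only [Papply, pdhgStep, Prod.fst_sub, Prod.snd_sub, Matrix.mulVec_sub, Matrix.mulVec_add,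
      Matrix.mulVec_smul, Pi.add_apply, Pi.sub_apply, Pi.smul_apply, smul_eq_mul]
    field_simp
    ring

theorem pdhgStep_isFirmlyNonexpansive (hη : 0 < η) :
    IsFirmlyNonexpansive (pdhgForm A η) (pdhgStep A b c η) := by
  rintro ⟨x, y⟩ ⟨x', y'⟩
  rw [LinearMap.map_sub₂, pdhgForm_apply, pdhgForm_apply, Papply_sub_pdhgStep A b c hη.ne',
    Papply_sub_pdhgStep A b c hη.ne']
  set p := x + η • (Aᵀ *ᵥ y) - η • c
  set p' := x' + η • (Aᵀ *ᵥ y') - η • c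
  have hX : (pdhgStep A b c η (x, y)).1 = posPt p := rfl
  have hX' : (pdhgStep A b c η (x', y')).1 = posPt p' := rfl
  have hmono := mul_nonneg (one_div_nonneg.mpr hη.le) (posPt_residual_monotone p p')
  rw [← hX, ← hX'] at hmono
  clear_value p p'
  simp only [Prod.fst_sub, Prod.snd_sub, sub_dotProduct, add_dotProduct, dotProduct_sub,
    smul_dotProduct, smul_eq_mul, transpose_mulVec_dotProduct, dotProduct_comm (A *ᵥ _)]
    at hmono ⊢
  linarith

end PDHG

/-- reflected Halpern PDHG,
`zᵏ⁺¹ = ((k+1)/(k+2))·(2·PDHG(zᵏ) − zᵏ) + (1/(k+2))·z⁰`, with `η < 1/‖A‖₂` and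
nonempty fixed-point set `Z*`, satisfies
`‖zᵏ − PDHG(zᵏ)‖_P ≤ (1/(k+1))·dist_P(z⁰, Z*)` for every `k ≥ 1`. -/
theorem stmt9 {n m : ℕ} (A : Matrix (Fin m) (Fin n) ℝ) (b : Fin m → ℝ) (c : Fin n → ℝ)
    (η : ℝ) (hη0 : 0 < η) (hη : η < 1 / specNorm A)
    (z : ℕ → (Fin n → ℝ) × (Fin m → ℝ))
    (hiter : ∀ k : ℕ, z (k + 1) =
      (((k : ℝ) + 1) / ((k : ℝ) + 2)) • ((2 : ℝ) • pdhgStep A b c η (z k) - z k)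
        + (1 / ((k : ℝ) + 2)) • z 0)
    (hfix : {w : (Fin n → ℝ) × (Fin m → ℝ) | pdhgStep A b c η w = w}.Nonempty) :
    ∀ k : ℕ, 1 ≤ k →
      Pnorm A η (z k - pdhgStep A b c η (z k)) ≤
        (1 / ((k : ℝ) + 1)) *
          distP A η (z 0) {w : (Fin n → ℝ) × (Fin m → ℝ) | pdhgStep A b c η w = w} := by
  have hσ : 0 < specNorm A := by
    by_contra! h
    linarith [one_div_nonpos.mpr h]
  have hB := pdhgForm_isPosSemidef A hη0 ((lt_div_iff₀ hσ).mp hη).le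
  have hT := pdhgStep_isFirmlyNonexpansive A b c hη0
  intro k _
  have hbound : ((k : ℝ) + 1) * Pnorm A η (z k - pdhgStep A b c η (z k)) ≤
      distP A η (z 0) {w | pdhgStep A b c η w = w} := by
    refine le_csInf (hfix.image _) ?_
    rintro _ ⟨w, hw, rfl⟩
    simpa only [Pnorm, pdhgForm_self] using hT.halpern_residual_le hB hiter hw k
  rw [one_div_mul_eq_div, le_div_iff₀ (by positivity)]
  linarith
end

section
/- Assume the LP and its dual are feasible and bounded, so that the set Z* of optimal primal-dual pairs is nonempty. Then there exists a constant H > 0 (a Hoffman constant) such that for every z = (x,y) ∈ Z = ℝ₊ⁿ × ℝᵐ, (1/H)·dist₂(z, Z*) ≤ KKT(z). -/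
open Matrix
open scoped BigOperators

section HoffmanAux
open scoped RealInnerProductSpace BigOperators

lemma cone_caratheodory {E : Type*} [AddCommGroup E] [Module ℝ E] {ι : Type*} [DecidableEq ι]
    (v : ι → E) (s : Finset ι) :
    ∀ lam : ι → ℝ, (∀ i, 0 ≤ lam i) →
    ∃ (t : Finset ι) (mu : ι → ℝ), t ⊆ s ∧ LinearIndependent ℝ (fun i : {x // x ∈ t} => v i) ∧
      (∀ i, 0 ≤ mu i) ∧ ∑ i ∈ t, mu i • v i = ∑ i ∈ s, lam i • v i := by
  classical
  induction s using Finset.strongInduction with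
  | _ s ih =>
    intro lam hlam
    by_cases hind : LinearIndependent ℝ (fun i : {x // x ∈ s} => v i)
    · exact ⟨s, lam, subset_rfl, hind, hlam, rfl⟩
    · obtain ⟨g, hg0, ⟨i₁, hi₁⟩⟩ := Fintype.not_linearIndependent_iff.1 hind
      -- extend g to ι
      set c : ι → ℝ := fun i => if h : i ∈ s then g ⟨i, h⟩ else 0 with hc
      have hcsum : ∑ i ∈ s, c i • v i = 0 := by
        rw [← Finset.sum_attach s (fun i => c i • v i)]
        rw [← hg0]
        apply Finset.sum_congr rfl
        intro i _
        simp [hc, i.2]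
      have hcex : ∃ i ∈ s, c i ≠ 0 := ⟨i₁, i₁.2, by simp [hc, i₁.2]; exact hi₁⟩
      -- WLOG some positive coefficient
      obtain ⟨c, hcsum, i₂, hi₂s, hi₂pos⟩ :
          ∃ c : ι → ℝ, ∑ i ∈ s, c i • v i = 0 ∧ ∃ i ∈ s, 0 < c i := by
        obtain ⟨i, his, hine⟩ := hcex
        rcases lt_or_gt_of_ne hine with h | h
        · refine ⟨-c, ?_, i, his, by simpa using h⟩
          simp only [Pi.neg_apply, neg_smul, Finset.sum_neg_distrib, hcsum, neg_zero]
        · exact ⟨c, hcsum, i, his, h⟩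
      -- take min ratio over positive coefficients
      set T : Finset ι := s.filter (fun i => 0 < c i) with hT
      have hTne : T.Nonempty := ⟨i₂, by simp [hT, hi₂s, hi₂pos]⟩
      obtain ⟨i₀, hi₀T, hi₀min⟩ := T.exists_min_image (fun i => lam i / c i) hTne
      have hi₀s : i₀ ∈ s := (Finset.mem_filter.1 hi₀T).1
      have hci₀ : 0 < c i₀ := (Finset.mem_filter.1 hi₀T).2
      set r : ℝ := lam i₀ / c i₀ with hr
      have hr0 : 0 ≤ r := div_nonneg (hlam i₀) hci₀.le
      set mu : ι → ℝ := fun i => if i ∈ s then lam i - r * c i else 0 with hmu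
      have hmu0 : ∀ i, 0 ≤ mu i := by
        intro i
        simp only [hmu]
        split_ifs with his
        · rcases le_or_gt (c i) 0 with h | h
          · nlinarith [hlam i]
          · have h2 : lam i₀ / c i₀ ≤ lam i / c i := hr ▸ hi₀min i (by simp [hT, his, h])
            rw [div_le_div_iff₀ hci₀ h] at h2
            rw [hr, sub_nonneg, div_mul_eq_mul_div, div_le_iff₀ hci₀]
            linarith
        · exact le_rfl
      have hmusum : ∑ i ∈ s, mu i • v i = ∑ i ∈ s, lam i • v i := by
        have : ∑ i ∈ s, mu i • v i = ∑ i ∈ s, (lam i • v i - r • (c i • v i)) := by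
          apply Finset.sum_congr rfl
          intro i his
          simp [hmu, his, sub_smul, smul_smul]
        rw [this, Finset.sum_sub_distrib, ← Finset.smul_sum, hcsum, smul_zero, sub_zero]
      have hmui₀ : mu i₀ = 0 := by
        simp [hmu, hi₀s, hr]
        field_simp
        ring
      obtain ⟨t, nu, hts, hind', hnu0, hnusum⟩ :=
        ih (s.erase i₀) (Finset.erase_ssubset hi₀s) mu hmu0
      refine ⟨t, nu, hts.trans (Finset.erase_subset _ _), hind', hnu0, ?_⟩
      rw [hnusum, Finset.sum_erase s (by rw [hmui₀, zero_smul]), hmusum]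

lemma indep_bound {E : Type*} [NormedAddCommGroup E] [InnerProductSpace ℝ E]
    {ι : Type*} [Fintype ι] [DecidableEq ι] (v : ι → E) (t : Finset ι)
    (hind : LinearIndependent ℝ (fun i : {x // x ∈ t} => v i)) :
    ∃ C : ℝ, 0 < C ∧ ∀ mu : ι → ℝ, (∀ i, 0 ≤ mu i) →
      ∑ i ∈ t, mu i ≤ C * ‖∑ i ∈ t, mu i • v i‖ := by
  classical
  rcases t.eq_empty_or_nonempty with rfl | ⟨j, hj⟩
  · exact ⟨1, one_pos, fun mu _ => by simp⟩
  · set S : Set (ι → ℝ) :=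
      Set.Icc 0 1 ∩ {lam | (∀ i ∉ t, lam i = 0) ∧ ∑ i ∈ t, lam i = 1} with hS
    have hScpt : IsCompact S := by
      apply IsCompact.inter_right isCompact_Icc
      rw [Set.setOf_and]
      apply IsClosed.inter
      · rw [Set.setOf_forall]
        refine isClosed_iInter fun i => ?_
        by_cases h : i ∈ t
        · simp [h]
        · simpa [h] using isClosed_eq (continuous_apply i) (continuous_const (y := (0:ℝ)))
      · exact isClosed_eq (continuous_finset_sum _ fun i _ => continuous_apply i)
          continuous_const
    have hSne : S.Nonempty := by
      refine ⟨fun i => if i = j then 1 else 0, ⟨?_, ?_⟩, ?_, ?_⟩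
      · intro i; by_cases h : i = j <;> simp [h]
      · intro i; by_cases h : i = j <;> simp [h]
      · intro i hit
        have : i ≠ j := fun h => hit (h ▸ hj)
        simp [this]
      · rw [Finset.sum_ite_eq' t j (fun _ => (1:ℝ))]
        simp [hj]
    have hfc : ContinuousOn (fun lam : ι → ℝ => ‖∑ i ∈ t, lam i • v i‖) S :=
      (continuous_norm.comp (continuous_finset_sum _ fun i _ =>
        (continuous_apply i).smul continuous_const)).continuousOn
    obtain ⟨lam₀, hlam₀S, hmin⟩ := hScpt.exists_isMinOn hSne hfc
    set cmin : ℝ := ‖∑ i ∈ t, lam₀ i • v i‖ with hcmin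
    have hcpos : 0 < cmin := by
      rcases (norm_nonneg (∑ i ∈ t, lam₀ i • v i)).lt_or_eq with h | h
      · exact h
      · exfalso
        have hz : ∑ i ∈ t, lam₀ i • v i = 0 := norm_eq_zero.1 h.symm
        have hz' : ∑ i : {x // x ∈ t}, lam₀ i • v (i : ι) = 0 := by
          rw [Finset.sum_coe_sort t (fun i => lam₀ i • v i)]; exact hz
        have hall := Fintype.linearIndependent_iff.1 hind (fun i => lam₀ i) hz'
        have : ∑ i ∈ t, lam₀ i = 1 := hlam₀S.2.2
        rw [Finset.sum_congr rfl (fun i hi => hall ⟨i, hi⟩)] at this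
        simp at this
    refine ⟨1 / cmin, by positivity, fun mu hmu => ?_⟩
    set s := ∑ i ∈ t, mu i with hs
    have hs0 : 0 ≤ s := Finset.sum_nonneg fun i _ => hmu i
    rcases hs0.lt_or_eq with hspos | hszero
    · -- normalize
      set lam : ι → ℝ := fun i => if i ∈ t then mu i / s else 0 with hlam
      have hlamS : lam ∈ S := by
        refine ⟨⟨?_, ?_⟩, ?_, ?_⟩
        · intro i; by_cases h : i ∈ t <;> simp [hlam, h]
          exact div_nonneg (hmu i) hs0
        · intro i; by_cases h : i ∈ t <;> simp [hlam, h]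
          rw [div_le_one hspos]
          exact Finset.single_le_sum (fun i _ => hmu i) h
        · intro i hit; simp [hlam, hit]
        · have h4 : ∑ i ∈ t, lam i = ∑ i ∈ t, mu i / s :=
            Finset.sum_congr rfl (fun i hi => by simp [hlam, hi])
          rw [h4, ← Finset.sum_div, ← hs, div_self hspos.ne']
      have hle := hmin hlamS
      have heq : ∑ i ∈ t, lam i • v i = (1 / s) • ∑ i ∈ t, mu i • v i := by
        rw [Finset.smul_sum]
        apply Finset.sum_congr rfl
        intro i hi
        simp [hlam, hi, smul_smul, div_eq_mul_inv, mul_comm]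
      have this : cmin ≤ (1 / s) * ‖∑ i ∈ t, mu i • v i‖ := by
        have h3 : cmin ≤ ‖(1 / s) • ∑ i ∈ t, mu i • v i‖ := heq ▸ hle
        rwa [norm_smul, Real.norm_eq_abs,
          abs_of_pos (by positivity : (0:ℝ) < 1 / s)] at h3
      have h5 : s * cmin ≤ s * (1 / s * ‖∑ i ∈ t, mu i • v i‖) :=
        mul_le_mul_of_nonneg_left this hs0
      have h6 : s * (1 / s * ‖∑ i ∈ t, mu i • v i‖) = ‖∑ i ∈ t, mu i • v i‖ := by
        field_simp
      rw [one_div, inv_mul_eq_div, le_div_iff₀ hcpos]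
      linarith
    · rw [← hszero]
      positivity

lemma coneGen_isClosed {E : Type*} [NormedAddCommGroup E] [InnerProductSpace ℝ E]
    [FiniteDimensional ℝ E] {ι : Type*} [Fintype ι] [DecidableEq ι]
    (v : ι → E) (Act : Finset ι) :
    IsClosed {x : E | ∃ lam : ι → ℝ, (∀ i, 0 ≤ lam i) ∧ x = ∑ i ∈ Act, lam i • v i} := by
  classical
  -- the cone generated by a subfamily with independent vectors
  set L : Finset ι → Set E := fun t =>
    {x : E | ∃ mu : ι → ℝ, (∀ i, 0 ≤ mu i) ∧ x = ∑ i ∈ t, mu i • v i} with hL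
  have hLclosed : ∀ t : Finset ι, LinearIndependent ℝ (fun i : {x // x ∈ t} => v i) →
      IsClosed (L t) := by
    intro t hind
    -- linear map from functions on the subtype
    set f : ({x // x ∈ t} → ℝ) →ₗ[ℝ] E :=
      { toFun := fun mu => ∑ i : {x // x ∈ t}, mu i • v (i : ι)
        map_add' := by
          intro a b; simp [add_smul, Finset.sum_add_distrib]
        map_smul' := by
          intro r a; simp [smul_smul, Finset.smul_sum] } with hf
    have hker : LinearMap.ker f = ⊥ := by
      rw [LinearMap.ker_eq_bot']
      intro mu hmu
      have := Fintype.linearIndependent_iff.1 hind mu hmu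
      funext i; exact this i
    have hemb := LinearMap.isClosedEmbedding_of_injective hker
    have himg : L t = f '' {mu : {x // x ∈ t} → ℝ | ∀ i, 0 ≤ mu i} := by
      ext x
      constructor
      · rintro ⟨mu, hmu0, rfl⟩
        refine ⟨fun i => mu i, fun i => hmu0 i, ?_⟩
        simp only [hf, LinearMap.coe_mk, AddHom.coe_mk]
        show ∑ i : {x // x ∈ t}, mu i • v (i : ι) = _
        rw [Finset.sum_coe_sort t (fun i => mu i • v i)]
      · rintro ⟨mu, hmu0, rfl⟩
        refine ⟨fun i => if h : i ∈ t then mu ⟨i, h⟩ else 0, ?_, ?_⟩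
        · intro i; by_cases h : i ∈ t <;> simp [h]; exact hmu0 _
        · simp only [hf, LinearMap.coe_mk, AddHom.coe_mk]
          show ∑ i : {x // x ∈ t}, mu i • v (i : ι) = _
          rw [← Finset.sum_coe_sort t (fun i => (if h : i ∈ t then mu ⟨i, h⟩ else 0) • v i)]
          apply Finset.sum_congr rfl
          intro i _
          simp [i.2]
    rw [himg]
    apply hemb.isClosedMap
    have : {mu : {x // x ∈ t} → ℝ | ∀ i, 0 ≤ mu i} = ⋂ i, {mu | 0 ≤ mu i} := by
      ext mu; simp [Set.mem_iInter]
    rw [this]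
    exact isClosed_iInter fun i => isClosed_le continuous_const (continuous_apply i)
  have hunion : {x : E | ∃ lam : ι → ℝ, (∀ i, 0 ≤ lam i) ∧ x = ∑ i ∈ Act, lam i • v i}
      = ⋃ t ∈ {t : Finset ι | t ⊆ Act ∧ LinearIndependent ℝ (fun i : {x // x ∈ t} => v i)},
        L t := by
    ext x
    simp only [Set.mem_setOf_eq, Set.mem_iUnion]
    constructor
    · rintro ⟨lam, hlam0, rfl⟩
      obtain ⟨t, mu, hts, hind, hmu0, hsum⟩ := cone_caratheodory v Act lam hlam0
      exact ⟨t, ⟨hts, hind⟩, mu, hmu0, hsum.symm⟩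
    · rintro ⟨t, ⟨hts, _⟩, mu, hmu0, rfl⟩
      refine ⟨fun i => if i ∈ t then mu i else 0, ?_, ?_⟩
      · intro i; by_cases h : i ∈ t <;> simp [h]; exact hmu0 i
      · symm
        rw [← Finset.sum_subset hts (fun i _ hit => by simp [hit])]
        exact Finset.sum_congr rfl fun i hi => by simp [hi]
  rw [hunion]
  exact Set.Finite.isClosed_biUnion (Set.toFinite _)
    (fun t ht => hLclosed t ht.2)

lemma mem_cone_of_dual {E : Type*} [NormedAddCommGroup E] [InnerProductSpace ℝ E]
    [FiniteDimensional ℝ E] {ι : Type*} [Fintype ι] [DecidableEq ι]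
    (v : ι → E) (Act : Finset ι) (u : E)
    (hu : ∀ y : E, (∀ i ∈ Act, ⟪v i, y⟫ ≤ 0) → ⟪u, y⟫ ≤ 0) :
    ∃ lam : ι → ℝ, (∀ i, 0 ≤ lam i) ∧ u = ∑ i ∈ Act, lam i • v i := by
  classical
  haveI : CompleteSpace E := FiniteDimensional.complete ℝ E
  set Kset : Set E := {x : E | ∃ lam : ι → ℝ, (∀ i, 0 ≤ lam i) ∧ x = ∑ i ∈ Act, lam i • v i}
    with hKset
  set K : ConvexCone ℝ E :=
    { carrier := Kset
      smul_mem' := by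
        rintro c hc x ⟨lam, hlam0, rfl⟩
        exact ⟨c • lam, fun i => mul_nonneg hc.le (hlam0 i), by
          simp [Finset.smul_sum, smul_smul]⟩
      add_mem' := by
        rintro x ⟨lam, hlam0, rfl⟩ y ⟨lam', hlam'0, rfl⟩
        exact ⟨lam + lam', fun i => add_nonneg (hlam0 i) (hlam'0 i), by
          simp [add_smul, Finset.sum_add_distrib]⟩ } with hK
  by_contra hnot
  have hune : u ∉ K := fun h => hnot h
  have hne : (K : Set E).Nonempty := ⟨0, ⟨0, fun i => le_rfl, by simp⟩⟩
  have hclosed : IsClosed (K : Set E) := coneGen_isClosed v Act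
  obtain ⟨y, hy1, hy2⟩ :=
    ProperCone.hyperplane_separation' (E := E)
      { carrier := Kset
        add_mem' := fun ha hb => K.add_mem' ha hb
        zero_mem' := ⟨0, fun i => le_rfl, by simp⟩
        smul_mem' := by
          rintro c x ⟨lam, hlam0, rfl⟩
          exact ⟨(c : ℝ) • lam, fun i => mul_nonneg c.2 (hlam0 i), by
            rw [Finset.smul_sum]
            exact Finset.sum_congr rfl fun i _ => by rw [Pi.smul_apply, smul_eq_mul, mul_smul]; rfl⟩
        isClosed' := hclosed } (fun h => hnot h)
  have hvy : ∀ i ∈ Act, ⟪v i, -y⟫ ≤ 0 := by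
    intro i hi
    have hvK : v i ∈ K := ⟨fun i' => if i' = i then 1 else 0, by
      intro i'; by_cases h : i' = i <;> simp [h], by
      rw [Finset.sum_congr rfl (fun i' _ => by rfl)]
      rw [show (∑ i' ∈ Act, (if i' = i then (1:ℝ) else 0) • v i')
        = ∑ i' ∈ Act, (if i' = i then v i' else 0) from
        Finset.sum_congr rfl (fun i' _ => by split <;> simp)]
      rw [Finset.sum_ite_eq' Act i v]
      simp [hi]⟩
    have := hy1 (v i) hvK
    rw [inner_neg_right]
    linarith
  have := hu (-y) hvy
  rw [inner_neg_right] at this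
  have h3 : 0 ≤ ⟪u, y⟫ := by linarith
  rw [real_inner_comm] at h3
  linarith

lemma hoffman_abstract {E : Type*} [NormedAddCommGroup E] [InnerProductSpace ℝ E]
    [FiniteDimensional ℝ E] {ι : Type*} [Fintype ι] [DecidableEq ι]
    (v : ι → E) (d : ι → ℝ) (hne : {x : E | ∀ i, ⟪v i, x⟫ ≤ d i}.Nonempty) :
    ∃ H : ℝ, 0 < H ∧ ∀ z : E, ∀ r : ℝ, 0 ≤ r → (∀ i, ⟪v i, z⟫ - d i ≤ r) →
      ∃ w, (∀ i, ⟪v i, w⟫ ≤ d i) ∧ ‖z - w‖ ≤ H * r := by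
  classical
  haveI : CompleteSpace E := FiniteDimensional.complete ℝ E
  -- choose constants for each independent subfamily
  have hC : ∀ t : Finset ι, ∃ C : ℝ, 0 < C ∧
      (LinearIndependent ℝ (fun i : {x // x ∈ t} => v i) → ∀ mu : ι → ℝ, (∀ i, 0 ≤ mu i) →
        ∑ i ∈ t, mu i ≤ C * ‖∑ i ∈ t, mu i • v i‖) := by
    intro t
    by_cases h : LinearIndependent ℝ (fun i : {x // x ∈ t} => v i)
    · obtain ⟨C, hC0, hCb⟩ := indep_bound v t h
      exact ⟨C, hC0, fun _ => hCb⟩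
    · exact ⟨1, one_pos, fun h' => absurd h' h⟩
  choose C hCpos hCb using hC
  set H : ℝ := 1 + ∑ t : Finset ι, C t with hH
  have hCsum : ∀ t : Finset ι, C t ≤ H := by
    intro t
    have h1 : C t ≤ ∑ t' : Finset ι, C t' :=
      Finset.single_le_sum (fun t' _ => (hCpos t').le) (Finset.mem_univ t)
    linarith
  have hHpos : 0 < H := by
    have : (0:ℝ) ≤ ∑ t : Finset ι, C t := Finset.sum_nonneg fun t _ => (hCpos t).le
    linarith
  refine ⟨H, hHpos, fun z r hr hres => ?_⟩
  set P : Set E := {x : E | ∀ i, ⟪v i, x⟫ ≤ d i} with hP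
  have hPconv : Convex ℝ P := by
    have : P = ⋂ i, {x : E | ⟪v i, x⟫ ≤ d i} := by ext x; simp [hP, Set.mem_iInter]
    rw [this]
    refine convex_iInter fun i => convex_halfSpace_le ?_ (d i)
    exact ⟨fun a b => inner_add_right _ _ _, fun c a => real_inner_smul_right _ _ c⟩
  have hPclosed : IsClosed P := by
    have : P = ⋂ i, {x : E | ⟪v i, x⟫ ≤ d i} := by ext x; simp [hP, Set.mem_iInter]
    rw [this]
    exact isClosed_iInter fun i =>
      isClosed_le (Continuous.inner continuous_const continuous_id) continuous_const
  obtain ⟨xb, hxbP, hxbmin⟩ :=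
    exists_norm_eq_iInf_of_complete_convex hne hPclosed.isComplete hPconv z
  have hvar := (norm_eq_iInf_iff_real_inner_le_zero hPconv hxbP).1 hxbmin
  set u : E := z - xb with hu
  set Act : Finset ι := Finset.univ.filter (fun i => ⟪v i, xb⟫ = d i) with hAct
  -- the dual property of u
  have hdual : ∀ y : E, (∀ i ∈ Act, ⟪v i, y⟫ ≤ 0) → ⟪u, y⟫ ≤ 0 := by
    intro y hy
    -- choose a small positive step
    set g : ι → ℝ := fun i =>
      if ⟪v i, xb⟫ = d i then 1 else (d i - ⟪v i, xb⟫) / (|⟪v i, y⟫| + 1) with hg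
    have hgpos : ∀ i, 0 < g i := by
      intro i
      simp only [hg]
      split_ifs with h
      · exact one_pos
      · have h2 : ⟪v i, xb⟫ < d i := lt_of_le_of_ne (hxbP i) h
        apply div_pos (by linarith) (by positivity)
    set T : Finset ℝ := insert 1 (Finset.univ.image g) with hT
    have hTne : T.Nonempty := ⟨1, Finset.mem_insert_self _ _⟩
    set τ : ℝ := T.min' hTne with hτ
    have hτpos : 0 < τ := by
      have := T.min'_mem hTne
      rw [← hτ] at this
      rcases Finset.mem_insert.1 this with h | h
      · rw [h]; exact one_pos
      · obtain ⟨i, _, hgi⟩ := Finset.mem_image.1 h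
        rw [← hgi]; exact hgpos i
    have hτle : ∀ i, τ ≤ g i := fun i =>
      T.min'_le _ (Finset.mem_insert_of_mem (Finset.mem_image_of_mem g (Finset.mem_univ i)))
    have hmem : xb + τ • y ∈ P := by
      intro i
      rw [inner_add_right, real_inner_smul_right]
      by_cases h : ⟪v i, xb⟫ = d i
      · have hyi : ⟪v i, y⟫ ≤ 0 := hy i (by simp [hAct, h])
        nlinarith
      · have hgi : g i = (d i - ⟪v i, xb⟫) / (|⟪v i, y⟫| + 1) := by simp [hg, h]
        have habs : |⟪v i, y⟫| + 1 > 0 := by positivity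
        have h2 : τ * (|⟪v i, y⟫| + 1) ≤ d i - ⟪v i, xb⟫ := by
          have := hτle i
          rw [hgi, le_div_iff₀ habs] at this
          linarith
        have h3 : τ * ⟪v i, y⟫ ≤ τ * |⟪v i, y⟫| :=
          mul_le_mul_of_nonneg_left (le_abs_self _) hτpos.le
        nlinarith
    have := hvar _ hmem
    rw [add_sub_cancel_left, real_inner_smul_right] at this
    nlinarith
  obtain ⟨lam, hlam0, hlamsum⟩ := mem_cone_of_dual v Act u hdual
  obtain ⟨t, mu, hts, hind, hmu0, hmusum⟩ := cone_caratheodory v Act lam hlam0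
  have hut : u = ∑ i ∈ t, mu i • v i := by rw [hmusum, ← hlamsum]
  -- bound ‖u‖
  have hinner : ⟪u, u⟫ ≤ (∑ i ∈ t, mu i) * r := by
    have h1 : ⟪u, u⟫ = ∑ i ∈ t, mu i * ⟪v i, u⟫ := by
      nth_rewrite 1 [hut]
      rw [sum_inner]
      exact Finset.sum_congr rfl fun i _ => real_inner_smul_left _ _ _
    rw [h1, Finset.sum_mul]
    apply Finset.sum_le_sum
    intro i hi
    have hiAct : i ∈ Act := hts hi
    have heq : ⟪v i, xb⟫ = d i := (Finset.mem_filter.1 hiAct).2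
    have h2 : ⟪v i, u⟫ ≤ r := by
      rw [hu, inner_sub_right, heq]
      exact hres i
    exact mul_le_mul_of_nonneg_left h2 (hmu0 i)
  have hnorm : ‖u‖ ≤ H * r := by
    rcases eq_or_lt_of_le (norm_nonneg u) with h | h
    · rw [← h]; positivity
    · have h2 : ‖u‖ ^ 2 = ⟪u, u⟫ := by
        rw [real_inner_self_eq_norm_sq]
      have h3 : ∑ i ∈ t, mu i ≤ C t * ‖∑ i ∈ t, mu i • v i‖ := hCb t hind mu hmu0
      rw [← hut] at h3
      have h4 : ‖u‖ ^ 2 ≤ C t * ‖u‖ * r := by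
        calc ‖u‖ ^ 2 = ⟪u, u⟫ := h2
          _ ≤ (∑ i ∈ t, mu i) * r := hinner
          _ ≤ C t * ‖u‖ * r := mul_le_mul_of_nonneg_right h3 hr
      have h5 : ‖u‖ ≤ C t * r := by nlinarith
      calc ‖u‖ ≤ C t * r := h5
        _ ≤ H * r := mul_le_mul_of_nonneg_right (hCsum t) hr
  exact ⟨xb, hxbP, hnorm⟩

lemma mem_saddleSet_iff {n m : ℕ} (A : Matrix (Fin m) (Fin n) ℝ) (b : Fin m → ℝ)
    (c : Fin n → ℝ) (z : (Fin n → ℝ) × (Fin m → ℝ)) :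
    z ∈ saddleSet A b c ↔ (∀ i, 0 ≤ z.1 i) ∧ A *ᵥ z.1 = b ∧
      (∀ i, (Aᵀ *ᵥ z.2) i ≤ c i) ∧ c ⬝ᵥ z.1 - b ⬝ᵥ z.2 ≤ 0 := by
  obtain ⟨x, y⟩ := z
  simp only [saddleSet, Set.mem_setOf_eq]
  have hyb : y ⬝ᵥ b = b ⬝ᵥ y := dotProduct_comm y b
  constructor
  · rintro ⟨hx0, h1, h2⟩
    have hAx : A *ᵥ x = b := by
      set w : Fin m → ℝ := b - A *ᵥ x with hw
      have e1 := h1 (y + w)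
      have e2 : Lag A b c x (y + w) = Lag A b c x y - w ⬝ᵥ (A *ᵥ x) + b ⬝ᵥ w := by
        simp only [Lag, add_dotProduct, dotProduct_add]
        ring
      have e3 : w ⬝ᵥ w ≤ 0 := by
        have e4 : w ⬝ᵥ w = b ⬝ᵥ w - w ⬝ᵥ (A *ᵥ x) := by
          nth_rewrite 1 [hw]
          rw [sub_dotProduct, dotProduct_comm (A *ᵥ x) w]
        rw [e4]
        rw [e2] at e1
        linarith
      have e5 : 0 ≤ w ⬝ᵥ w := Finset.sum_nonneg fun i _ => mul_self_nonneg _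
      have e6 : w = 0 := dotProduct_self_eq_zero.1 (le_antisymm e3 e5)
      rw [hw, sub_eq_zero] at e6
      exact e6.symm
    have hLag : Lag A b c x y = c ⬝ᵥ x := by
      simp only [Lag, hAx]
      linarith
    have hgap : c ⬝ᵥ x - b ⬝ᵥ y ≤ 0 := by
      have e7 := h2 0 (fun i => le_rfl)
      rw [hLag] at e7
      simp only [Lag, Matrix.mulVec_zero, dotProduct_zero] at e7
      linarith
    refine ⟨hx0, hAx, ?_, hgap⟩
    intro i
    by_contra hcon
    push_neg at hcon
    set s : ℝ := c i - (Aᵀ *ᵥ y) i with hs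
    have hsneg : s < 0 := by rw [hs]; linarith
    set τ : ℝ := max 1 ((c ⬝ᵥ x - b ⬝ᵥ y - 1) / s) with hτ
    have hτ1 : (1:ℝ) ≤ τ := le_max_left _ _
    have hτs : τ * s ≤ c ⬝ᵥ x - b ⬝ᵥ y - 1 := by
      have h5 : (c ⬝ᵥ x - b ⬝ᵥ y - 1) / s ≤ τ := le_max_right _ _
      calc τ * s ≤ ((c ⬝ᵥ x - b ⬝ᵥ y - 1) / s) * s :=
            (mul_le_mul_right_of_neg hsneg).2 h5
        _ = c ⬝ᵥ x - b ⬝ᵥ y - 1 := div_mul_cancel₀ _ hsneg.ne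
    set x' : Fin n → ℝ := τ • (Pi.single i 1 : Fin n → ℝ) with hx'
    have hx'0 : ∀ i', 0 ≤ x' i' := by
      intro i'
      have h6 : (0:ℝ) ≤ (Pi.single i 1 : Fin n → ℝ) i' := by
        rcases eq_or_ne i' i with rfl | h
        · simp
        · simp [Pi.single_eq_of_ne h]
      have h7 : (0:ℝ) ≤ τ := by linarith
      simpa [hx'] using mul_nonneg h7 h6
    have e7 := h2 x' hx'0
    have e8 : Lag A b c x' y = τ * s + b ⬝ᵥ y := by
      simp only [Lag]
      have e9 : y ⬝ᵥ (A *ᵥ x') = (Aᵀ *ᵥ y) ⬝ᵥ x' := by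
        rw [Matrix.dotProduct_mulVec, Matrix.mulVec_transpose]
      rw [e9, hx', dotProduct_smul, dotProduct_smul,
        dotProduct_single, dotProduct_single]
      rw [hs]
      simp only [smul_eq_mul]
      ring
    rw [hLag, e8] at e7
    linarith
  · rintro ⟨hx0, hAx, hdual, hgap⟩
    have hLag : Lag A b c x y = c ⬝ᵥ x := by
      simp only [Lag, hAx]
      linarith
    refine ⟨hx0, ?_, ?_⟩
    · intro y'
      have : Lag A b c x y' = c ⬝ᵥ x := by
        simp only [Lag, hAx]
        have : y' ⬝ᵥ b = b ⬝ᵥ y' := dotProduct_comm y' b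
        linarith
      rw [this, hLag]
    · intro x' hx'0
      have e1 : Lag A b c x' y = (c ⬝ᵥ x' - (Aᵀ *ᵥ y) ⬝ᵥ x') + b ⬝ᵥ y := by
        simp only [Lag]
        have e9 : y ⬝ᵥ (A *ᵥ x') = (Aᵀ *ᵥ y) ⬝ᵥ x' := by
          rw [Matrix.dotProduct_mulVec, Matrix.mulVec_transpose]
        rw [e9]
      have e2 : 0 ≤ c ⬝ᵥ x' - (Aᵀ *ᵥ y) ⬝ᵥ x' := by
        rw [← sub_dotProduct]
        refine Finset.sum_nonneg fun i _ => ?_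
        exact mul_nonneg (by have := hdual i; simp [Pi.sub_apply]; linarith) (hx'0 i)
      rw [hLag, e1]
      linarith

noncomputable section GlueAux

/-- embedding of a primal-dual pair into Euclidean space -/
def embH {n m : ℕ} (z : (Fin n → ℝ) × (Fin m → ℝ)) : EuclideanSpace ℝ (Fin n ⊕ Fin m) :=
  (WithLp.equiv 2 _).symm (Sum.elim z.1 z.2)

lemma embH_inner {n m : ℕ} (p q : (Fin n → ℝ) × (Fin m → ℝ)) :
    ⟪embH p, embH q⟫ = p.1 ⬝ᵥ q.1 + p.2 ⬝ᵥ q.2 := by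
  rw [PiLp.inner_apply]
  rw [Fintype.sum_sum_type]
  simp only [embH, WithLp.equiv_symm_apply, PiLp.toLp_apply, Sum.elim_inl, Sum.elim_inr,
    RCLike.inner_apply, conj_trivial]
  simp only [dotProduct, mul_comm]

lemma embH_nrmP {n m : ℕ} (p : (Fin n → ℝ) × (Fin m → ℝ)) : nrmP p = ‖embH p‖ := by
  rw [norm_eq_sqrt_real_inner, embH_inner, nrmP]

lemma embH_sub {n m : ℕ} (p q : (Fin n → ℝ) × (Fin m → ℝ)) :
    embH (p - q) = embH p - embH q := by
  apply (WithLp.equiv 2 _).injective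
  funext k
  cases k <;> simp [embH, Prod.fst_sub, Prod.snd_sub]

/-- pair from a Euclidean vector -/
def pairH {n m : ℕ} (w : EuclideanSpace ℝ (Fin n ⊕ Fin m)) : (Fin n → ℝ) × (Fin m → ℝ) :=
  (fun i => w (Sum.inl i), fun j => w (Sum.inr j))

lemma embH_pairH {n m : ℕ} (w : EuclideanSpace ℝ (Fin n ⊕ Fin m)) : embH (pairH w) = w := by
  apply (WithLp.equiv 2 _).injective
  funext k
  cases k <;> simp [embH, pairH]

/-- index type for the constraints of `Z*` -/
abbrev HIdx (n m : ℕ) := Fin n ⊕ Fin m ⊕ Fin m ⊕ Fin n ⊕ Unit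

/-- constraint rows defining `Z*` (as pairs) -/
def rowP {n m : ℕ} (A : Matrix (Fin m) (Fin n) ℝ) (b : Fin m → ℝ) (c : Fin n → ℝ) :
    HIdx n m → ((Fin n → ℝ) × (Fin m → ℝ)) × ℝ
  | Sum.inl i => ((-Pi.single i 1, 0), 0)
  | Sum.inr (Sum.inl j) => (((fun i' => A j i'), 0), b j)
  | Sum.inr (Sum.inr (Sum.inl j)) => (((fun i' => -A j i'), 0), -b j)
  | Sum.inr (Sum.inr (Sum.inr (Sum.inl i))) => ((0, fun j => A j i), c i)
  | Sum.inr (Sum.inr (Sum.inr (Sum.inr _))) => ((c, -b), 0)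

lemma rowP_inner {n m : ℕ} (A : Matrix (Fin m) (Fin n) ℝ) (b : Fin m → ℝ) (c : Fin n → ℝ)
    (z : (Fin n → ℝ) × (Fin m → ℝ)) :
    (∀ k : HIdx n m, ⟪embH (rowP A b c k).1, embH z⟫ - (rowP A b c k).2 =
      Sum.elim (fun i => -z.1 i)
        (Sum.elim (fun j => (A *ᵥ z.1) j - b j)
          (Sum.elim (fun j => b j - (A *ᵥ z.1) j)
            (Sum.elim (fun i => (Aᵀ *ᵥ z.2) i - c i)
              (fun _ => c ⬝ᵥ z.1 - b ⬝ᵥ z.2)))) k) := by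
  intro k
  obtain ⟨x, y⟩ := z
  rcases k with i | j | j | i | u
  · rw [embH_inner]
    simp [rowP, neg_dotProduct, single_dotProduct]
  · rw [embH_inner]
    simp [rowP, Matrix.mulVec, dotProduct]
  · rw [embH_inner]
    simp [rowP, neg_dotProduct, Matrix.mulVec, dotProduct]
    ring
  · rw [embH_inner]
    simp [rowP, Matrix.mulVec, dotProduct, Matrix.transpose_apply]
  · rw [embH_inner]
    simp [rowP, neg_dotProduct]
    rw [sub_eq_add_neg]

end GlueAux


end HoffmanAux

open scoped RealInnerProductSpace in
/-- Hoffman: if the LP and its dual are feasible and bounded (so the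
optimal set `Z*` is nonempty), then there is `H > 0` with
`(1/H)·dist₂(z, Z*) ≤ KKT(z)` for every `z ∈ Z = ℝ₊ⁿ × ℝᵐ`. -/
theorem stmt10 {n m : ℕ} (A : Matrix (Fin m) (Fin n) ℝ) (b : Fin m → ℝ) (c : Fin n → ℝ)
    (hZ : (saddleSet A b c).Nonempty) :
    ∃ H : ℝ, 0 < H ∧ ∀ z : (Fin n → ℝ) × (Fin m → ℝ), (∀ i, 0 ≤ z.1 i) →
      (1 / H) * dist2 z (saddleSet A b c) ≤ KKTerr A b c z := by
  classical
  -- membership characterization for the polyhedral system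
  have hPiff : ∀ w : EuclideanSpace ℝ (Fin n ⊕ Fin m),
      (∀ k : HIdx n m, ⟪embH (rowP A b c k).1, w⟫ ≤ (rowP A b c k).2) ↔
        pairH w ∈ saddleSet A b c := by
    intro w
    have key : ∀ k : HIdx n m, ⟪embH (rowP A b c k).1, w⟫ - (rowP A b c k).2 =
        Sum.elim (fun i => -(pairH w).1 i)
          (Sum.elim (fun j => (A *ᵥ (pairH w).1) j - b j)
            (Sum.elim (fun j => b j - (A *ᵥ (pairH w).1) j)
              (Sum.elim (fun i => (Aᵀ *ᵥ (pairH w).2) i - c i)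
                (fun _ => c ⬝ᵥ (pairH w).1 - b ⬝ᵥ (pairH w).2)))) k := by
      intro k
      have h0 := rowP_inner A b c (pairH w) k
      rwa [embH_pairH] at h0
    rw [mem_saddleSet_iff]
    constructor
    · intro h
      have h' : ∀ k, ⟪embH (rowP A b c k).1, w⟫ - (rowP A b c k).2 ≤ 0 :=
        fun k => sub_nonpos.2 (h k)
      refine ⟨?_, ?_, ?_, ?_⟩
      · intro i
        have := h' (Sum.inl i)
        rw [key (Sum.inl i)] at this
        simp only [Sum.elim_inl] at this
        linarith
      · funext j
        have h1 := h' (Sum.inr (Sum.inl j))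
        have h2 := h' (Sum.inr (Sum.inr (Sum.inl j)))
        rw [key _] at h1 h2
        simp only [Sum.elim_inl, Sum.elim_inr] at h1 h2
        have : (A *ᵥ (pairH w).1) j = b j := by linarith
        exact this
      · intro i
        have h1 := h' (Sum.inr (Sum.inr (Sum.inr (Sum.inl i))))
        rw [key _] at h1
        simp only [Sum.elim_inl, Sum.elim_inr] at h1
        linarith
      · have h1 := h' (Sum.inr (Sum.inr (Sum.inr (Sum.inr ()))))
        rw [key _] at h1
        simp only [Sum.elim_inr] at h1
        linarith
    · rintro ⟨hx0, hAx, hdual, hgap⟩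
      intro k
      rw [← sub_nonpos, key k]
      rcases k with i | j | j | i | u
      · simp only [Sum.elim_inl]
        have := hx0 i
        linarith
      · simp only [Sum.elim_inl, Sum.elim_inr, hAx]
        linarith
      · simp only [Sum.elim_inl, Sum.elim_inr, hAx]
        linarith
      · simp only [Sum.elim_inl, Sum.elim_inr]
        have := hdual i
        linarith
      · simp only [Sum.elim_inr]
        exact hgap
  -- nonemptiness of the system
  have hpe : ∀ p : (Fin n → ℝ) × (Fin m → ℝ), pairH (embH p) = p := by
    intro p
    apply Prod.ext <;> rfl
  have hne : {x : EuclideanSpace ℝ (Fin n ⊕ Fin m) |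
      ∀ k : HIdx n m, ⟪embH (rowP A b c k).1, x⟫ ≤ (rowP A b c k).2}.Nonempty := by
    obtain ⟨z₀, hz₀⟩ := hZ
    refine ⟨embH z₀, ?_⟩
    rw [Set.mem_setOf_eq, hPiff, hpe]
    exact hz₀
  obtain ⟨H, hHpos, hmain⟩ :=
    hoffman_abstract (fun k : HIdx n m => embH (rowP A b c k).1)
      (fun k => (rowP A b c k).2) hne
  refine ⟨H, hHpos, fun z hz => ?_⟩
  have hr0 : 0 ≤ KKTerr A b c z := Real.sqrt_nonneg _
  -- residual bounds
  have htot : ∀ a : ℝ, a ^ 2 ≤ (A *ᵥ z.1 - b) ⬝ᵥ (A *ᵥ z.1 - b)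
      + posPt (Aᵀ *ᵥ z.2 - c) ⬝ᵥ posPt (Aᵀ *ᵥ z.2 - c)
      + (max (c ⬝ᵥ z.1 - b ⬝ᵥ z.2) 0) ^ 2 → a ≤ KKTerr A b c z := by
    intro a ha
    calc a ≤ |a| := le_abs_self a
      _ = Real.sqrt (a ^ 2) := (Real.sqrt_sq_eq_abs a).symm
      _ ≤ KKTerr A b c z := Real.sqrt_le_sqrt ha
  have hS1 : 0 ≤ (A *ᵥ z.1 - b) ⬝ᵥ (A *ᵥ z.1 - b) :=
    Finset.sum_nonneg fun _ _ => mul_self_nonneg _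
  have hS2 : 0 ≤ posPt (Aᵀ *ᵥ z.2 - c) ⬝ᵥ posPt (Aᵀ *ᵥ z.2 - c) :=
    Finset.sum_nonneg fun _ _ => mul_self_nonneg _
  have hS3 : 0 ≤ (max (c ⬝ᵥ z.1 - b ⬝ᵥ z.2) 0) ^ 2 := sq_nonneg _
  have hcomp1 : ∀ j, ((A *ᵥ z.1 - b) j) ^ 2 ≤ (A *ᵥ z.1 - b) ⬝ᵥ (A *ᵥ z.1 - b) := by
    intro j
    rw [sq]
    exact Finset.single_le_sum (f := fun j' => (A *ᵥ z.1 - b) j' * (A *ᵥ z.1 - b) j')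
      (fun j' _ => mul_self_nonneg _) (Finset.mem_univ j)
  have hcomp2 : ∀ i, (posPt (Aᵀ *ᵥ z.2 - c) i) ^ 2
      ≤ posPt (Aᵀ *ᵥ z.2 - c) ⬝ᵥ posPt (Aᵀ *ᵥ z.2 - c) := by
    intro i
    rw [sq]
    exact Finset.single_le_sum (f := fun i' => posPt (Aᵀ *ᵥ z.2 - c) i' * posPt (Aᵀ *ᵥ z.2 - c) i')
      (fun i' _ => mul_self_nonneg _) (Finset.mem_univ i)
  have hres : ∀ k : HIdx n m,
      ⟪embH (rowP A b c k).1, embH z⟫ - (rowP A b c k).2 ≤ KKTerr A b c z := by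
    intro k
    rw [rowP_inner A b c z k]
    rcases k with i | j | j | i | u
    · simp only [Sum.elim_inl]
      have := hz i
      linarith
    · simp only [Sum.elim_inl, Sum.elim_inr]
      refine htot _ ?_
      have h1 : (A *ᵥ z.1) j - b j = (A *ᵥ z.1 - b) j := by simp [Pi.sub_apply]
      rw [h1]
      have := hcomp1 j
      linarith
    · simp only [Sum.elim_inl, Sum.elim_inr]
      refine htot _ ?_
      have h1 : b j - (A *ᵥ z.1) j = -((A *ᵥ z.1 - b) j) := by
        simp only [Pi.sub_apply]
        ring
      rw [h1, neg_sq]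
      have := hcomp1 j
      linarith
    · simp only [Sum.elim_inl, Sum.elim_inr]
      have h1 : (Aᵀ *ᵥ z.2) i - c i ≤ posPt (Aᵀ *ᵥ z.2 - c) i := by
        simp only [posPt, Pi.sub_apply]
        exact le_max_left _ _
      refine h1.trans (htot _ ?_)
      have := hcomp2 i
      linarith
    · simp only [Sum.elim_inr]
      have h1 : c ⬝ᵥ z.1 - b ⬝ᵥ z.2 ≤ max (c ⬝ᵥ z.1 - b ⬝ᵥ z.2) 0 := le_max_left _ _
      refine h1.trans (htot _ ?_)
      linarith
  obtain ⟨w, hwP, hwle⟩ := hmain (embH z) (KKTerr A b c z) hr0 hres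
  have hwsad : pairH w ∈ saddleSet A b c := (hPiff w).1 hwP
  have hdist : dist2 z (saddleSet A b c) ≤ H * KKTerr A b c z := by
    have hmem : nrmP (z - pairH w) ∈ (fun w' => nrmP (z - w')) '' saddleSet A b c :=
      ⟨pairH w, hwsad, rfl⟩
    have hbdd : BddBelow ((fun w' => nrmP (z - w')) '' saddleSet A b c) := by
      refine ⟨0, ?_⟩
      rintro a ⟨w', _, rfl⟩
      exact Real.sqrt_nonneg _
    have heq : nrmP (z - pairH w) = ‖embH z - w‖ := by
      rw [embH_nrmP, embH_sub, embH_pairH]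
    calc dist2 z (saddleSet A b c) ≤ nrmP (z - pairH w) := csInf_le hbdd hmem
      _ = ‖embH z - w‖ := heq
      _ ≤ H * KKTerr A b c z := hwle
  calc (1 / H) * dist2 z (saddleSet A b c) ≤ (1 / H) * (H * KKTerr A b c z) :=
        mul_le_mul_of_nonneg_left hdist (by positivity)
    _ = KKTerr A b c z := by field_simp
end
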